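/- arXiv:2603.03859 — 12 statements merged into one kernel-verified Lean document; each statement's English description precedes it below -/
import Mathlib

section
/- For any non-empty simple graph G (with at least one edge) whose adjacency matrix has largest eigenvalue λ_max and smallest eigenvalue λ_min, the chromatic number satisfies χ(G) ≥ 1 − λ_max/λ_min. -/
open Matrix RealInnerProductSpace

private lemma hoffman_dot_mulVec_symm {V : Type*} [Fintype V]
    {A : Matrix V V ℝ} (hA : A.IsHermitian) (u v : V → ℝ) :
    u ⬝ᵥ (A *ᵥ v) = (A *ᵥ u) ⬝ᵥ v := by
  rw [dotProduct_mulVec, ← mulVec_transpose,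
    ← Matrix.conjTranspose_eq_transpose_of_trivial, hA.eq]

private lemma hoffman_rayleigh_min {V : Type*} [Fintype V] [DecidableEq V]
    {A : Matrix V V ℝ} (hA : A.IsHermitian) {lmin : ℝ}
    (h : ∀ i, lmin ≤ hA.eigenvalues i) (y : V → ℝ) :
    lmin * (y ⬝ᵥ y) ≤ y ⬝ᵥ (A *ᵥ y) := by
  classical
  set b := hA.eigenvectorBasis with hb
  have hdot : ∀ u v : EuclideanSpace ℝ V,
      ⟪u, v⟫ = dotProduct (WithLp.equiv 2 (V → ℝ) u) (WithLp.equiv 2 (V → ℝ) v) := by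
    intro u v
    rw [EuclideanSpace.inner_eq_star_dotProduct]
    simp [dotProduct, mul_comm]
  set y' : EuclideanSpace ℝ V := (WithLp.equiv 2 (V → ℝ)).symm y with hy'
  set Ay : EuclideanSpace ℝ V := (WithLp.equiv 2 (V → ℝ)).symm (A *ᵥ y) with hAy
  have h1 : y ⬝ᵥ (A *ᵥ y) = ∑ i, hA.eigenvalues i * (⟪b i, y'⟫ * ⟪b i, y'⟫) := by
    rw [show y ⬝ᵥ (A *ᵥ y) = ⟪y', Ay⟫ by rw [hdot, hy', hAy]; simp, ← b.sum_inner_mul_inner y' Ay]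
    congr 1
    ext i
    have hbAy : ⟪b i, Ay⟫ = hA.eigenvalues i * ⟪b i, y'⟫ := by
      rw [hdot, hdot]
      show dotProduct (WithLp.equiv 2 (V → ℝ) (b i)) (A *ᵥ y) = _
      rw [hoffman_dot_mulVec_symm hA, hb, WithLp.equiv_apply, hA.mulVec_eigenvectorBasis, smul_dotProduct]
      rfl
    rw [hbAy, real_inner_comm y' (b i)]
    ring
  have h2 : y ⬝ᵥ y = ∑ i, ⟪b i, y'⟫ * ⟪b i, y'⟫ := by
    rw [show y ⬝ᵥ y = ⟪y', y'⟫ by rw [hdot, hy']; simp, ← b.sum_inner_mul_inner y' y']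
    congr 1
    ext i
    rw [real_inner_comm y' (b i)]
  rw [h1, h2, Finset.mul_sum]
  apply Finset.sum_le_sum
  intro i _
  have h0 : (0:ℝ) ≤ ⟪b i, y'⟫ * ⟪b i, y'⟫ := mul_self_nonneg _
  nlinarith [h i]

open Matrix in
open Classical in
/-- `μ` is an eigenvalue of the adjacency matrix of `G`. -/
noncomputable def SimpleGraph.IsAdjEigenvalue {V : Type*} [Fintype V]
    (G : SimpleGraph V) (μ : ℝ) : Prop :=
  ∃ v : V → ℝ, v ≠ 0 ∧ (G.adjMatrix ℝ) *ᵥ v = μ • v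

/-- Hoffman bound: for any graph with at least one edge,
`χ(G) ≥ 1 − λ_max/λ_min`. -/
theorem hoffman_bound {V : Type*} [Fintype V] (G : SimpleGraph V)
    (hne : ∃ u v : V, G.Adj u v)
    (lmax lmin : ℝ)
    (hmax : G.IsAdjEigenvalue lmax ∧ ∀ μ, G.IsAdjEigenvalue μ → μ ≤ lmax)
    (hmin : G.IsAdjEigenvalue lmin ∧ ∀ μ, G.IsAdjEigenvalue μ → lmin ≤ μ)
    (c : ℕ) (hc : G.chromaticNumber = c) :
    (c : ℝ) ≥ 1 - lmax / lmin := by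
  classical
  obtain ⟨u, w, huw⟩ := hne
  set A : Matrix V V ℝ := G.adjMatrix ℝ with hAdef
  have hA : A.IsHermitian := by
    show Aᴴ = A
    rw [Matrix.conjTranspose_eq_transpose_of_trivial]
    exact SimpleGraph.isSymm_adjMatrix G
  have heig : ∀ i : V, G.IsAdjEigenvalue (hA.eigenvalues i) := fun i =>
    ⟨_, fun h => hA.eigenvectorBasis.orthonormal.ne_zero i ((WithLp.ofLp_eq_zero 2).mp h), hA.mulVec_eigenvectorBasis i⟩
  have hray : ∀ y : V → ℝ, lmin * (y ⬝ᵥ y) ≤ y ⬝ᵥ (A *ᵥ y) :=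
    fun y => hoffman_rayleigh_min hA (fun i => hmin.2 _ (heig i)) y
  have hsym : ∀ p q : V → ℝ, p ⬝ᵥ (A *ᵥ q) = (A *ᵥ p) ⬝ᵥ q :=
    fun p q => hoffman_dot_mulVec_symm hA p q
  -- lmin < 0
  have hlmin : lmin < 0 := by
    have h2 := hray (Pi.single u 1 - Pi.single w 1)
    have hzz : (Pi.single u 1 - Pi.single w 1 : V → ℝ) ⬝ᵥ
        (Pi.single u 1 - Pi.single w 1) = 2 := by
      simp [sub_dotProduct, dotProduct_sub, single_dotProduct,
        Pi.single_apply, huw.ne, huw.ne']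
      norm_num
    have hAz : (Pi.single u 1 - Pi.single w 1 : V → ℝ) ⬝ᵥ
        (A *ᵥ (Pi.single u 1 - Pi.single w 1)) = -2 := by
      simp [Matrix.mulVec_sub, dotProduct_sub, sub_dotProduct,
        Matrix.mulVec_single, single_dotProduct, hAdef,
        SimpleGraph.adjMatrix_apply, huw, huw.symm]
      norm_num
    rw [hzz, hAz] at h2
    linarith
  -- a coloring with c colors
  have hcol : G.Colorable c := SimpleGraph.chromaticNumber_le_iff_colorable.mp (le_of_eq hc)
  obtain ⟨C⟩ := hcol
  have hcr : (0:ℝ) < (c:ℝ) := by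
    have : 0 < c := (C u).pos
    exact_mod_cast this
  have hc1 : 1 ≤ (c:ℝ) := by
    have : 1 ≤ c := (C u).pos
    exact_mod_cast this
  obtain ⟨x, hx0, hx⟩ := hmax.1
  have hx' : A *ᵥ x = lmax • x := hx
  set s : ℝ := x ⬝ᵥ x with hs_def
  have hs : 0 < s := by
    obtain ⟨i, hi⟩ := Function.ne_iff.mp hx0
    have hle : x i * x i ≤ ∑ j, x j * x j :=
      Finset.single_le_sum (f := fun j => x j * x j)
        (fun j _ => mul_self_nonneg _) (Finset.mem_univ i)
    have hpos : 0 < x i * x i := mul_self_pos.mpr hi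
    have heq : s = ∑ j, x j * x j := rfl
    linarith [hle, hpos]
  set cr : ℝ := (c:ℝ) with hcr_def
  set k : ℝ := 1 / cr with hk_def
  set xt : Fin c → V → ℝ := fun t v => if C v = t then x v else 0 with hxt
  have e1 : ∀ t, xt t ⬝ᵥ (A *ᵥ xt t) = 0 := by
    intro t
    rw [dotProduct]
    apply Finset.sum_eq_zero
    intro i _
    rcases eq_or_ne (C i) t with hi | hi
    · have hz : (A *ᵥ xt t) i = 0 := by
        rw [Matrix.mulVec, dotProduct]
        apply Finset.sum_eq_zero
        intro j _
        rcases eq_or_ne (C j) t with hj | hj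
        · have hnadj : ¬ G.Adj i j := fun hadj => C.valid hadj (hi.trans hj.symm)
          simp [hAdef, SimpleGraph.adjMatrix_apply, hnadj]
        · simp [hxt, hj]
      rw [hz, mul_zero]
    · simp [hxt, hi]
  have e2 : ∀ t, xt t ⬝ᵥ x = xt t ⬝ᵥ xt t := by
    intro t
    apply Finset.sum_congr rfl
    intro v _
    rcases eq_or_ne (C v) t with hv | hv <;> simp [hxt, hv]
  have hS : ∑ t, xt t ⬝ᵥ xt t = s := by
    calc ∑ t, xt t ⬝ᵥ xt t = ∑ t, ∑ v, xt t v * xt t v := rfl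
    _ = ∑ v, ∑ t, xt t v * xt t v := Finset.sum_comm
    _ = ∑ v, x v * x v := by
        apply Finset.sum_congr rfl
        intro v _
        rw [show ∑ t, xt t v * xt t v = ∑ t, if C v = t then x v * x v else 0 from
          Finset.sum_congr rfl fun t _ => by
            rcases eq_or_ne (C v) t with h|h <;> simp [hxt, h]]
        simp
    _ = s := rfl
  have e3 : ∀ t, xt t ⬝ᵥ (A *ᵥ x) = lmax * (xt t ⬝ᵥ xt t) := by
    intro t; rw [hx', dotProduct_smul, smul_eq_mul, e2]
  have e4 : ∀ t, x ⬝ᵥ (A *ᵥ xt t) = lmax * (xt t ⬝ᵥ xt t) := by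
    intro t; rw [hsym, hx', smul_dotProduct, smul_eq_mul, dotProduct_comm, e2]
  have e5 : x ⬝ᵥ (A *ᵥ x) = lmax * s := by
    rw [hx', dotProduct_smul, smul_eq_mul, ← hs_def]
  have key : ∀ t, lmin * ((1 - 2*k) * (xt t ⬝ᵥ xt t) + k^2 * s) ≤
      lmax * (k^2 * s - 2*k*(xt t ⬝ᵥ xt t)) := by
    intro t
    have h := hray (xt t - k • x)
    have hq1 : (xt t - k • x) ⬝ᵥ (xt t - k • x) =
        (1 - 2*k) * (xt t ⬝ᵥ xt t) + k^2 * s := by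
      simp only [sub_dotProduct, dotProduct_sub, smul_dotProduct, dotProduct_smul,
        smul_eq_mul]
      rw [e2, dotProduct_comm x (xt t), e2, ← hs_def]
      ring
    have hq2 : (xt t - k • x) ⬝ᵥ (A *ᵥ (xt t - k • x)) =
        lmax * (k^2 * s - 2*k*(xt t ⬝ᵥ xt t)) := by
      rw [Matrix.mulVec_sub, Matrix.mulVec_smul]
      simp only [sub_dotProduct, dotProduct_sub, smul_dotProduct, dotProduct_smul,
        smul_eq_mul]
      rw [e1, e3, e4, e5]
      ring
    rw [hq1, hq2] at h
    exact h
  have hsum := Finset.sum_le_sum (fun t (_ : t ∈ Finset.univ) => key t)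
  have hL : ∑ t : Fin c, lmin * ((1 - 2*k) * (xt t ⬝ᵥ xt t) + k^2 * s) =
      lmin * ((1-2*k) * s + cr * (k^2 * s)) := by
    rw [← Finset.mul_sum, Finset.sum_add_distrib, ← Finset.mul_sum, hS,
      Finset.sum_const, Finset.card_univ, Fintype.card_fin, nsmul_eq_mul]
  have hR : ∑ t : Fin c, lmax * (k^2 * s - 2*k*(xt t ⬝ᵥ xt t)) =
      lmax * (cr * (k^2*s) - 2*k*s) := by
    rw [← Finset.mul_sum]
    congr 1
    rw [Finset.sum_sub_distrib, Finset.sum_const, Finset.card_univ,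
      Fintype.card_fin, nsmul_eq_mul, ← Finset.mul_sum, hS, hcr_def]
  rw [hL, hR] at hsum
  have hcr0 : cr ≠ 0 := ne_of_gt hcr
  have eL : (1-2*k)*s + cr*(k^2*s) = s - s/cr := by
    rw [hk_def]; field_simp; ring
  have eR : cr*(k^2*s) - 2*k*s = -(s/cr) := by
    rw [hk_def]; field_simp; ring
  rw [eL, eR] at hsum
  have hd : 0 < s / cr := div_pos hs hcr
  have hsum2 : lmin * ((cr - 1) * (s/cr)) ≤ -lmax * (s/cr) := by
    have e : (cr - 1) * (s/cr) = s - s/cr := by field_simp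
    rw [e]
    linarith [hsum]
  have h10 : lmin * (cr - 1) ≤ -lmax := by nlinarith [hsum2, hd]
  have hln : (0:ℝ) < -lmin := by linarith
  have h7 : lmax / (-lmin) ≤ cr - 1 := by
    rw [div_le_iff₀ hln]; nlinarith [h10]
  have h8 : lmax / (-lmin) = -(lmax/lmin) := by rw [div_neg]
  rw [ge_iff_le]
  have h9 : -(lmax/lmin) ≤ cr - 1 := h8 ▸ h7
  linarith
end

section
/- Let G be a non-empty k-regular graph on n vertices with smallest adjacency eigenvalue λ_min, and let C be a coclique (independent set) in G. Then |C| ≤ −n·λ_min/(k − λ_min). -/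
open Matrix Finset in
private lemma rayleigh_min {V : Type*} [Fintype V] [DecidableEq V] {A : Matrix V V ℝ}
    (hA : A.IsHermitian) {lmin : ℝ} (hl : ∀ i, lmin ≤ hA.eigenvalues i) (x : V → ℝ) :
    lmin * (x ⬝ᵥ x) ≤ x ⬝ᵥ (A *ᵥ x) := by
  set U : Matrix V V ℝ := ↑hA.eigenvectorUnitary with hU
  set y : V → ℝ := star U *ᵥ x with hy
  have hstar : star U = Uᵀ := by
    ext i j; simp [Matrix.star_apply]
  have key : ∀ w : V → ℝ, x ⬝ᵥ (U *ᵥ w) = y ⬝ᵥ w := by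
    intro w
    rw [dotProduct_mulVec, hy, hstar, mulVec_transpose]
  have hxAx : x ⬝ᵥ (A *ᵥ x) = ∑ i, hA.eigenvalues i * (y i)^2 := by
    conv_lhs => rw [hA.spectral_theorem, Unitary.conjStarAlgAut_apply]
    rw [← Matrix.mulVec_mulVec, ← Matrix.mulVec_mulVec, ← hU, ← hy, key]
    simp only [dotProduct, mulVec_diagonal, Function.comp_apply, RCLike.ofReal_real_eq_id,
      id_eq]
    exact Finset.sum_congr rfl fun i _ => by ring
  have hxx : x ⬝ᵥ x = ∑ i, (y i)^2 := by
    have h1 : U * star U = 1 := (Matrix.mem_unitaryGroup_iff).mp hA.eigenvectorUnitary.2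
    calc x ⬝ᵥ x = x ⬝ᵥ ((U * star U) *ᵥ x) := by rw [h1, one_mulVec]
      _ = ∑ i, (y i)^2 := by
        rw [← Matrix.mulVec_mulVec, key, ← hy]
        exact Finset.sum_congr rfl fun i _ => by ring
  rw [hxAx, hxx, Finset.mul_sum]
  exact Finset.sum_le_sum fun i _ =>
    mul_le_mul_of_nonneg_right (hl i) (sq_nonneg _)

open Matrix Finset in
/-- Hoffman's ratio bound: in a non-empty `k`-regular graph on `n` vertices with smallest
adjacency eigenvalue `λ_min`, every coclique `C` satisfies `|C| ≤ -n·λ_min/(k - λ_min)`. -/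
theorem ratio_bound {V : Type*} [Fintype V] [DecidableEq V] (G : SimpleGraph V)
    [DecidableRel G.Adj]
    (hne : ∃ u v : V, G.Adj u v)
    (k : ℕ) (hreg : G.IsRegularOfDegree k)
    (lmin : ℝ)
    (hmin : G.IsAdjEigenvalue lmin ∧ ∀ μ, G.IsAdjEigenvalue μ → lmin ≤ μ)
    (C : Finset V) (hC : (C : Set V).Pairwise fun u v => ¬ G.Adj u v) :
    (C.card : ℝ) ≤ -(Fintype.card V : ℝ) * lmin / ((k : ℝ) - lmin) := by
  classical
  have hA : (G.adjMatrix ℝ).IsHermitian := by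
    show (G.adjMatrix ℝ)ᴴ = G.adjMatrix ℝ
    ext i j
    simp [Matrix.conjTranspose_apply, SimpleGraph.adj_comm]
  -- all eigenvalues are ≥ lmin
  have hadj : @SimpleGraph.adjMatrix ℝ V G (fun a b => Classical.propDecidable (G.Adj a b)) _ _
      = G.adjMatrix ℝ := by
    ext i j
    by_cases h' : G.Adj i j <;> simp [SimpleGraph.adjMatrix_apply, h']
  have hl : ∀ i, lmin ≤ hA.eigenvalues i := by
    intro i
    refine hmin.2 _ ⟨⇑(hA.eigenvectorBasis i), ?_, ?_⟩
    · intro h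
      exact hA.eigenvectorBasis.orthonormal.ne_zero i (by ext j; exact congrFun h j)
    · rw [hadj]
      exact hA.mulVec_eigenvectorBasis i
  have ray := rayleigh_min hA hl
  -- lmin < 0
  have hlneg : lmin < 0 := by
    obtain ⟨u, v, huv⟩ := hne
    have hne' : u ≠ v := G.ne_of_adj huv
    set z : V → ℝ := Pi.single u 1 - Pi.single v 1 with hz
    have h1 : z ⬝ᵥ z = 2 := by
      simp [hz, dotProduct_sub, sub_dotProduct, single_dotProduct, Pi.single_apply,
        hne', hne'.symm]
      norm_num
    have hvu : G.Adj v u := huv.symm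
    have h2 : z ⬝ᵥ (G.adjMatrix ℝ *ᵥ z) = -2 := by
      have : G.adjMatrix ℝ *ᵥ z = G.adjMatrix ℝ *ᵥ Pi.single u 1 - G.adjMatrix ℝ *ᵥ Pi.single v 1 := by
        rw [hz, mulVec_sub]
      rw [this]
      simp [hz, dotProduct_sub, sub_dotProduct, single_dotProduct, mulVec_single,
        SimpleGraph.adjMatrix_apply, huv, hvu, hne', hne'.symm]
      norm_num
    have := ray z
    rw [h1, h2] at this
    linarith
  have hk0 : (0:ℝ) < (k:ℝ) - lmin := by
    have : (0:ℝ) ≤ (k:ℝ) := Nat.cast_nonneg k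
    linarith
  set n : ℝ := (Fintype.card V : ℝ) with hn
  set c : ℝ := (C.card : ℝ) with hc
  have hcn : c ≤ n := by rw [hn, hc]; exact_mod_cast Finset.card_le_univ C
  have hc0 : 0 ≤ c := Nat.cast_nonneg _
  -- the test vector
  set x : V → ℝ := fun i => (if i ∈ C then n else 0) - c with hx
  have hxval : ∀ i, x i = (if i ∈ C then n else 0) - c := fun i => rfl
  -- sum of x is zero
  have hcompl : ((Cᶜ : Finset V).card : ℝ) = n - c := by
    rw [Finset.card_compl]
    push_cast [Nat.cast_sub (Finset.card_le_univ C)]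
    rfl
  have hsumx : ∑ i, x i = 0 := by
    have : ∑ i, x i = ∑ i ∈ C, x i + ∑ i ∈ Cᶜ, x i := (Finset.sum_add_sum_compl C x).symm
    rw [this]
    have h1 : ∑ i ∈ C, x i = c * (n - c) := by
      rw [Finset.sum_congr rfl (fun i hi => by rw [hxval, if_pos hi]), Finset.sum_const,
        nsmul_eq_mul]
    have h2 : ∑ i ∈ Cᶜ, x i = (n - c) * (-c) := by
      rw [Finset.sum_congr rfl (fun i hi => by
        rw [hxval, if_neg (Finset.mem_compl.mp hi), zero_sub]), Finset.sum_const,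
        nsmul_eq_mul, hcompl]
    rw [h1, h2]; ring
  -- norm of x
  have hxx : x ⬝ᵥ x = c * (n - c) * n := by
    unfold dotProduct
    have : ∑ i, x i * x i = ∑ i ∈ C, x i * x i + ∑ i ∈ Cᶜ, x i * x i :=
      (Finset.sum_add_sum_compl C _).symm
    rw [this]
    have h1 : ∑ i ∈ C, x i * x i = c * ((n - c) * (n - c)) := by
      rw [Finset.sum_congr rfl (fun i hi => by rw [hxval, if_pos hi]), Finset.sum_const,
        nsmul_eq_mul]
    have h2 : ∑ i ∈ Cᶜ, x i * x i = (n - c) * (c * c) := by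
      rw [Finset.sum_congr rfl (fun i hi => by
        rw [hxval, if_neg (Finset.mem_compl.mp hi), zero_sub]), Finset.sum_const,
        nsmul_eq_mul, hcompl]
      ring_nf
    rw [h1, h2]; ring
  -- neighbor counts
  set e : V → ℝ := fun v => ((G.neighborFinset v ∩ C).card : ℝ) with he
  have hAxv : ∀ v, (G.adjMatrix ℝ *ᵥ x) v = n * e v - c * k := by
    intro v
    rw [SimpleGraph.adjMatrix_mulVec_apply]
    rw [Finset.sum_congr rfl (fun i _ => hxval i), Finset.sum_sub_distrib]
    have h1 : ∑ u ∈ G.neighborFinset v, (if u ∈ C then n else 0) = n * e v := by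
      rw [Finset.sum_ite_mem, Finset.sum_const, nsmul_eq_mul, he]; ring
    have h2 : ∑ _u ∈ G.neighborFinset v, c = k * c := by
      rw [Finset.sum_const, nsmul_eq_mul, G.card_neighborFinset_eq_degree, hreg v]
    rw [h1, h2]; ring
  have he0 : ∀ v ∈ C, e v = 0 := by
    intro v hv
    have : G.neighborFinset v ∩ C = ∅ := by
      ext u
      simp only [Finset.mem_inter, SimpleGraph.mem_neighborFinset, Finset.notMem_empty,
        iff_false, not_and]
      intro hadj hu
      exact hC hv hu (G.ne_of_adj hadj) hadj
    rw [he]; simp [this]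
  have hesum : ∑ v, e v = c * k := by
    have heval : ∀ v, e v = ∑ u ∈ C, (if G.Adj v u then (1:ℝ) else 0) := by
      intro v
      have h1 : (∑ u ∈ C, if G.Adj v u then (1:ℝ) else 0)
          = (#(C.filter fun u => G.Adj v u) : ℝ) := by rw [Finset.sum_boole]
      have h2 : C.filter (fun u => G.Adj v u) = G.neighborFinset v ∩ C := by
        ext u; simp [SimpleGraph.mem_neighborFinset, and_comm]
      rw [h1, h2, he]
    rw [Finset.sum_congr rfl (fun v _ => heval v), Finset.sum_comm]
    have : ∀ u ∈ C, ∑ v, (if G.Adj v u then (1:ℝ) else 0) = k := by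
      intro u _
      rw [Finset.sum_boole]
      have : Finset.univ.filter (fun v => G.Adj v u) = G.neighborFinset u := by
        ext v; simp [SimpleGraph.mem_neighborFinset, G.adj_comm]
      rw [this, G.card_neighborFinset_eq_degree, hreg u]
    rw [Finset.sum_congr rfl this, Finset.sum_const, nsmul_eq_mul]
  -- quadratic form value
  have hxAx : x ⬝ᵥ (G.adjMatrix ℝ *ᵥ x) = -(k * n * c^2) := by
    unfold dotProduct
    rw [Finset.sum_congr rfl (fun v _ => by rw [hAxv v])]
    have expand : ∀ v, x v * (n * e v - c * k) = n * (x v * e v) - (c * k) * x v := by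
      intro v; ring
    rw [Finset.sum_congr rfl (fun v _ => expand v), Finset.sum_sub_distrib,
      ← Finset.mul_sum, ← Finset.mul_sum, hsumx, mul_zero, sub_zero]
    have hxe : ∑ v, x v * e v = -(c * (c * k)) := by
      have : ∀ v, x v * e v = (if v ∈ C then n * e v else 0) - c * e v := by
        intro v
        by_cases hv : v ∈ C <;> simp [hxval, hv] <;> ring
      rw [Finset.sum_congr rfl (fun v _ => this v), Finset.sum_sub_distrib,
        Finset.sum_ite_mem, Finset.univ_inter]
      rw [Finset.sum_congr rfl (fun v hv => by rw [he0 v hv, mul_zero]),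
        Finset.sum_const_zero, ← Finset.mul_sum, hesum]
      ring
    rw [hxe]; ring
  -- combine
  have main := ray x
  rw [hxx, hxAx] at main
  rw [le_div_iff₀ hk0]
  rcases eq_or_lt_of_le hc0 with h0 | hcpos
  · rw [← h0, zero_mul]
    have hn0 : (0:ℝ) ≤ n := by rw [hn]; positivity
    nlinarith [mul_nonneg hn0 (neg_nonneg.mpr hlneg.le)]
  · have hn0 : 0 < n := lt_of_lt_of_le hcpos hcn
    nlinarith [mul_pos hcpos hn0]
end

section
/- Let G be a non-empty k-regular graph on n vertices with smallest adjacency eigenvalue λ_min, and let C be a coclique in G with |C| = −n·λ_min/(k − λ_min). Then every vertex outside C is adjacent to exactly −λ_min vertices of C. -/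
open Matrix Finset in
/-- Equality case of Hoffman's ratio bound: a Hoffman coclique
(`|C| = -n·λ_min/(k - λ_min)`) is `(-λ_min)`-regular: every vertex outside `C`
has exactly `-λ_min` neighbors in `C`. -/
theorem ratio_bound_equality {V : Type*} [Fintype V] [DecidableEq V] (G : SimpleGraph V)
    [DecidableRel G.Adj]
    (hne : ∃ u v : V, G.Adj u v)
    (k : ℕ) (hreg : G.IsRegularOfDegree k)
    (lmin : ℝ)
    (hmin : G.IsAdjEigenvalue lmin ∧ ∀ μ, G.IsAdjEigenvalue μ → lmin ≤ μ)
    (C : Finset V) (hC : (C : Set V).Pairwise fun u v => ¬ G.Adj u v)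
    (hcard : (C.card : ℝ) = -(Fintype.card V : ℝ) * lmin / ((k : ℝ) - lmin)) :
    ∀ v ∉ C, ((C.filter fun u => G.Adj v u).card : ℝ) = -lmin := by
  classical
  obtain ⟨u₀, w₀, huw⟩ := hne
  set A : Matrix V V ℝ := G.adjMatrix ℝ with hAdef
  have hAh : A.IsHermitian := by
    rw [Matrix.IsHermitian, Matrix.conjTranspose_eq_transpose_of_trivial]
    exact G.isSymm_adjMatrix
  set M : Matrix V V ℝ := A - lmin • (1 : Matrix V V ℝ) with hMdef
  have hMh : M.IsHermitian := by
    rw [Matrix.IsHermitian, Matrix.conjTranspose_eq_transpose_of_trivial, hMdef,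
      Matrix.transpose_sub, Matrix.transpose_smul, Matrix.transpose_one,
      show A.transpose = A from G.isSymm_adjMatrix]
  have hMmul : ∀ y : V → ℝ, M *ᵥ y = A *ᵥ y - lmin • y := by
    intro y
    rw [hMdef, Matrix.sub_mulVec, Matrix.smul_mulVec, Matrix.one_mulVec]
  have hpsd : M.PosSemidef := by
    apply hMh.posSemidef_iff_eigenvalues_nonneg.mpr
    intro i
    have hv := hMh.mulVec_eigenvectorBasis i
    set b : V → ℝ := ⇑(hMh.eigenvectorBasis i) with hb
    have hb0 : b ≠ 0 := by
      intro h
      apply hMh.eigenvectorBasis.toBasis.ne_zero i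
      rw [OrthonormalBasis.coe_toBasis]
      ext x
      exact congrFun h x
    have hev : G.IsAdjEigenvalue (hMh.eigenvalues i + lmin) := by
      refine ⟨b, hb0, ?_⟩
      rw [hMmul] at hv
      have := congrArg (· + lmin • b) hv
      have h2 : A *ᵥ b = (hMh.eigenvalues i + lmin) • b := by
        simpa [add_smul, sub_add_cancel] using this
      convert h2 using 3
    have := hmin.2 _ hev
    rw [Pi.zero_apply]
    linarith
  -- lmin ≤ -1
  have hlm : lmin ≤ -1 := by
    have h := hpsd.dotProduct_mulVec_nonneg (Pi.single u₀ 1 - Pi.single w₀ 1)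
    have hne' : u₀ ≠ w₀ := G.ne_of_adj huw
    rw [star_trivial, hMmul] at h
    simp only [dotProduct, Pi.sub_apply, Pi.smul_apply, mulVec, dotProduct,
      Pi.single_apply, smul_eq_mul] at h
    simp only [mul_ite, mul_one, mul_zero, sub_mul, ite_mul, one_mul, zero_mul,
      mul_sub, Finset.sum_sub_distrib, Finset.sum_ite_eq', Finset.mem_univ, if_true] at h
    have hwu : G.Adj w₀ u₀ := huw.symm
    simp only [hAdef, SimpleGraph.adjMatrix_apply, huw, hwu, G.irrefl,
      if_true, if_false, hne', hne'.symm] at h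
    linarith
  have hn0 : (0:ℝ) < (Fintype.card V : ℝ) := by
    have : 0 < Fintype.card V := Fintype.card_pos_iff.mpr ⟨u₀⟩
    exact_mod_cast this
  set nR : ℝ := (Fintype.card V : ℝ) with hnR
  set c : ℝ := (C.card : ℝ) with hc
  have hknn : (0:ℝ) ≤ (k:ℝ) := Nat.cast_nonneg k
  have hkl : (0:ℝ) < (k:ℝ) - lmin := by linarith
  have h1 : c * ((k:ℝ) - lmin) = -nR * lmin := by
    rw [hcard, div_mul_cancel₀]
    exact ne_of_gt hkl
  set x : V → ℝ := fun z => (if z ∈ C then nR else 0) - c with hx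
  set dC : V → ℝ := fun v => ((C.filter fun u => G.Adj v u).card : ℝ) with hdC
  have hAx : ∀ v, (A *ᵥ x) v = nR * dC v - c * k := by
    intro v
    rw [hAdef]
    rw [SimpleGraph.adjMatrix_mulVec_apply]
    rw [hx]
    rw [Finset.sum_sub_distrib]
    congr 1
    · rw [← Finset.sum_filter, Finset.sum_const, nsmul_eq_mul]
      have hff : (G.neighborFinset v).filter (fun w => w ∈ C) = C.filter (fun u => G.Adj v u) := by
        ext w
        simp [SimpleGraph.mem_neighborFinset, and_comm]
      rw [hff, mul_comm, hdC]
    · rw [Finset.sum_const, G.card_neighborFinset_eq_degree, hreg v, nsmul_eq_mul, mul_comm]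
  have hdC0 : ∀ v ∈ C, dC v = 0 := by
    intro v hvC
    simp only [hdC, Nat.cast_eq_zero, Finset.card_eq_zero, Finset.filter_eq_empty_iff]
    intro u huC hadj
    rcases eq_or_ne v u with rfl | hne'
    · exact G.irrefl hadj
    · exact hC hvC huC hne' hadj
  have hdCsum : ∑ v, dC v = (k:ℝ) * c := by
    have hnat : ∑ v : V, (C.filter fun u => G.Adj v u).card = k * C.card := by
      simp_rw [Finset.card_filter]
      rw [Finset.sum_comm]
      have h2 : ∀ u : V, ∑ v : V, (if G.Adj v u then 1 else 0) = k := by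
        intro u
        rw [← Finset.card_filter]
        have hfu : Finset.univ.filter (fun v => G.Adj v u) = G.neighborFinset u := by
          ext z
          simp [SimpleGraph.mem_neighborFinset, G.adj_comm]
        rw [hfu, G.card_neighborFinset_eq_degree, hreg u]
      simp_rw [h2]
      rw [Finset.sum_const, smul_eq_mul, mul_comm]
    simp only [hdC, hc]
    rw [← Nat.cast_sum, hnat]
    push_cast
    ring
  have hxsum : ∑ v : V, (if v ∈ C then (1:ℝ) else 0) = c := by
    rw [Finset.sum_ite_mem, Finset.univ_inter, Finset.sum_const, nsmul_eq_mul, mul_one, hc]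
  have hkey : ∀ v, x v * ((M *ᵥ x) v) =
      (-(c*k)*nR - lmin*nR^2 + 2*lmin*nR*c) * (if v ∈ C then (1:ℝ) else 0)
      + (-(c*nR)) * dC v + (c^2*k - lmin*c^2) := by
    intro v
    have hMv : (M *ᵥ x) v = (A *ᵥ x) v - lmin * x v := by
      rw [hMmul x]; simp
    rw [hMv, hAx v]
    by_cases hv : v ∈ C
    · rw [hdC0 v hv]
      simp only [hx, hv, if_true]
      ring
    · simp only [hx, hv, if_false]
      ring
  have hQ : x ⬝ᵥ (M *ᵥ x) = 0 := by
    rw [dotProduct]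
    rw [Finset.sum_congr rfl fun v _ => hkey v]
    rw [Finset.sum_add_distrib, Finset.sum_add_distrib, ← Finset.mul_sum, ← Finset.mul_sum,
      hxsum, hdCsum, Finset.sum_const, nsmul_eq_mul, Finset.card_univ, ← hnR]
    linear_combination (-(nR*c)) * h1
  have hMx0 : M *ᵥ x = 0 := by
    refine (hpsd.dotProduct_mulVec_zero_iff x).mp ?_
    rw [star_trivial]
    exact hQ
  intro v hv
  have h := congrFun hMx0 v
  rw [hMmul x] at h
  have h' : nR * dC v - c * k - lmin * ((0:ℝ) - c) = 0 := by
    have := h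
    simp only [Pi.sub_apply, Pi.smul_apply, Pi.zero_apply, smul_eq_mul] at this
    rw [hAx v] at this
    simpa [hx, hv] using this
  have hfin : nR * dC v = nR * (-lmin) := by linear_combination h' + h1
  have := mul_left_cancel₀ (ne_of_gt hn0) hfin
  simpa [hdC] using this
end

section
/- Let G be a graph on vertices v_1,…,v_n and a_1,…,a_n nonnegative integers. Then the chromatic number of the generalized line graph L(G;a_1,…,a_n) equals the maximum of χ(L(G)) and max_i (a_i + deg_G(v_i)). -/
/-- The generalized line graph `L(G; a)`: the disjoint union of the line graph `L(G)` and
cocktail party graphs `CP(a i)` for each vertex `i` of `G` (the cocktail party vertices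
being triples `⟨i, k, b⟩` with `k : Fin (a i)`), where each vertex of `CP(a i)` is joined to
each edge of `G` incident to `i`. -/
def SimpleGraph.GenLineGraph {V : Type*} (G : SimpleGraph V) (a : V → ℕ) :
    SimpleGraph (G.edgeSet ⊕ (Σ i : V, Fin (a i) × Bool)) where
  Adj x y :=
    match x, y with
    | Sum.inl e, Sum.inl f => e ≠ f ∧ ((e : Sym2 V) ∩ (f : Sym2 V) : Set V).Nonempty
    | Sum.inl e, Sum.inr p => p.1 ∈ (e : Sym2 V)
    | Sum.inr p, Sum.inl e => p.1 ∈ (e : Sym2 V)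
    | Sum.inr p, Sum.inr q => p.1 = q.1 ∧ (p.2.1 : ℕ) ≠ (q.2.1 : ℕ)
  symm := by
    constructor
    rintro (e | p) (f | q) h
    · exact ⟨Ne.symm h.1, by rw [Set.inter_comm]; exact h.2⟩
    · exact h
    · exact h
    · exact ⟨h.1.symm, h.2.symm⟩
  loopless := by
    constructor
    rintro (e | p) h
    · exact h.1 rfl
    · exact h.2 rfl

section Aux

open Finset

variable {V : Type*} [Fintype V] [DecidableEq V] (G : SimpleGraph V) [DecidableRel G.Adj]

/-- The set of edges incident to `i`, as a finset of `G.edgeSet`. -/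
private def incSub (i : V) : Finset G.edgeSet :=
  Finset.univ.filter fun e : G.edgeSet => i ∈ (e : Sym2 V)

private lemma mem_incSub {i : V} {e : G.edgeSet} :
    e ∈ incSub G i ↔ i ∈ (e : Sym2 V) := by
  simp [incSub]

private lemma card_incSub (i : V) : (incSub G i).card = G.degree i := by
  classical
  rw [← G.card_incidenceFinset_eq_degree]
  rw [← Finset.card_image_of_injective _ Subtype.val_injective]
  congr 1
  ext e
  simp [incSub, SimpleGraph.mem_incidenceFinset, SimpleGraph.incidenceSet]
  aesop

/-- The homomorphism from the line graph to the generalized line graph. -/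
private def lineHom (a : V → ℕ) : G.lineGraph →g G.GenLineGraph a where
  toFun := Sum.inl
  map_rel' := fun h => h

/-- The clique at vertex `i` consisting of incident edges and one cocktail-party vertex
from each pair. -/
private lemma clique_at (a : V → ℕ) (i : V) :
    ((G.GenLineGraph a).IsClique
      (((incSub G i).image (Sum.inl : G.edgeSet → G.edgeSet ⊕ (Σ j : V, Fin (a j) × Bool))) ∪
        ((Finset.univ : Finset (Fin (a i))).image
          fun k => Sum.inr ⟨i, k, true⟩) : Finset _)) := by
  intro x hx y hy hxy
  simp only [Finset.coe_union, Set.mem_union, Finset.coe_image, Set.mem_image,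
    Finset.mem_coe, Finset.coe_univ, Set.image_univ, Set.mem_range] at hx hy
  obtain ⟨e, he, rfl⟩ | ⟨k, rfl⟩ := hx <;> obtain ⟨f, hf, rfl⟩ | ⟨l, rfl⟩ := hy
  · refine ⟨fun h => hxy (by rw [h]), ⟨i, ?_, ?_⟩⟩
    · exact (mem_incSub G).1 he
    · exact (mem_incSub G).1 hf
  · exact (mem_incSub G).1 he
  · exact (mem_incSub G).1 hf
  · refine ⟨rfl, fun h => hxy ?_⟩
    have : k = l := Fin.val_injective h
    rw [this]

end Aux

/-- The chromatic number of the generalized line graph `L(G; a₁, …, aₙ)` is the maximum of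
`χ(L(G))` and `max_i (a_i + deg_G(v_i))`. -/


theorem genLineGraph_chromaticNumber {V : Type*} [Fintype V] [DecidableEq V]
    (G : SimpleGraph V) [DecidableRel G.Adj] (a : V → ℕ) :
    (G.GenLineGraph a).chromaticNumber =
      max G.lineGraph.chromaticNumber
        ((Finset.univ.sup fun i => a i + G.degree i : ℕ) : ℕ∞) := by
  classical
  set n₁ : ℕ := Finset.univ.sup fun i => a i + G.degree i with hn₁
  set n₀ : ℕ := G.lineGraph.chromaticNumber.toNat with hn₀
  have hLGfin : G.lineGraph.chromaticNumber = (n₀ : ℕ∞) := by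
    have := G.lineGraph.colorable_chromaticNumber_of_fintype
    have h2 : G.lineGraph.chromaticNumber ≠ ⊤ :=
      fun h => by simp [SimpleGraph.chromaticNumber_ne_top_iff_exists.2 ⟨_, this⟩] at h
    exact (ENat.coe_toNat h2).symm
  set N : ℕ := max n₀ n₁ with hN
  apply le_antisymm
  · -- upper bound: construct a coloring with N colors
    have hcolgoal : ∀ (h : (G.GenLineGraph a).Colorable N),
        (G.GenLineGraph a).chromaticNumber ≤
          max G.lineGraph.chromaticNumber ((n₁ : ℕ) : ℕ∞) := by
      intro h
      refine le_trans h.chromaticNumber_le ?_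
      rw [hLGfin, hN]
      rcases le_total n₀ n₁ with hle | hle
      · rw [sup_eq_right.2 hle]; exact le_max_right _ _
      · rw [sup_eq_left.2 hle]; exact le_max_left _ _
    apply hcolgoal
    rw [SimpleGraph.Colorable] at *
    have hC : G.lineGraph.Colorable N := by
      refine (G.lineGraph.colorable_chromaticNumber_of_fintype).mono ?_
      exact le_max_left _ _
    obtain ⟨C⟩ := hC
    -- S i : colors used by edges at i
    set S : V → Finset (Fin N) := fun i => (incSub G i).image C with hS
    have hScard : ∀ i, (S i).card = G.degree i := by
      intro i
      rw [hS, Finset.card_image_of_injOn, card_incSub]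
      intro e he f hf hef
      by_contra hne
      exact C.valid ⟨hne, ⟨i, (mem_incSub G).1 he, (mem_incSub G).1 hf⟩⟩ hef
    have hfree : ∀ i, a i ≤ ((S i)ᶜ : Finset (Fin N)).card := by
      intro i
      rw [Finset.card_compl, Fintype.card_fin, hScard]
      have h1 : a i + G.degree i ≤ n₁ := by
        rw [hn₁]; exact Finset.le_sup (f := fun j => a j + G.degree j) (Finset.mem_univ i)
      have h2 : n₁ ≤ N := le_max_right _ _
      omega
    have hf : ∀ i, ∃ f : Fin (a i) → Fin N,
        Function.Injective f ∧ ∀ k, f k ∉ S i := by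
      intro i
      obtain ⟨T, hT, hTc⟩ := Finset.exists_subset_card_eq (hfree i)
      refine ⟨fun k => (T.equivFin.symm (Fin.cast hTc.symm k) : T), ?_, ?_⟩
      · intro k l h
        have := T.equivFin.symm.injective (Subtype.val_injective h)
        exact Fin.ext (by simpa using congrArg Fin.val this)
      · intro k
        have := (T.equivFin.symm (Fin.cast hTc.symm k)).2
        exact fun hk => (Finset.mem_compl.1 (hT this)) hk
    choose f hfinj hfnot using hf
    refine ⟨SimpleGraph.Coloring.mk
      (fun x => match x with
        | Sum.inl e => C e
        | Sum.inr p => f p.1 p.2.1) ?_⟩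
    rintro (e | ⟨i, k, b⟩) (g | ⟨j, l, c⟩) h
    · exact C.valid h
    · intro hc
      have hc' : C e = f j l := hc
      exact hfnot j l (hc' ▸ Finset.mem_image_of_mem C ((mem_incSub G).2 h))
    · intro hc
      have hc' : f i k = C g := hc
      exact hfnot i k (hc'.symm ▸ Finset.mem_image_of_mem C ((mem_incSub G).2 h))
    · obtain ⟨rfl, hkl⟩ := h
      intro hc
      exact hkl (congrArg Fin.val (hfinj i hc))
  · rw [max_le_iff]
    constructor
    · -- line graph embeds
      apply SimpleGraph.chromaticNumber_le_of_forall_imp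
      intro n ⟨C⟩
      exact ⟨C.comp (lineHom G a)⟩
    · rcases isEmpty_or_nonempty V with hV | hV
      · simp [hn₁]
      obtain ⟨i, -, hi⟩ := Finset.exists_mem_eq_sup Finset.univ Finset.univ_nonempty
        (fun i => a i + G.degree i)
      rw [hn₁, hi]
      have hclq := clique_at G a i
      have := hclq.card_le_chromaticNumber
      refine le_trans ?_ this
      rw [Finset.card_union_of_disjoint, Finset.card_image_of_injective _ Sum.inl_injective,
        Finset.card_image_of_injective, card_incSub, Finset.card_univ, Fintype.card_fin]
      · simp [Nat.add_comm]
      · intro k l hkl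
        simpa using hkl
      · rw [Finset.disjoint_left]
        rintro x hx hy
        simp only [Finset.mem_image] at hx hy
        obtain ⟨e, _, rfl⟩ := hx
        obtain ⟨kk, _, h⟩ := hy
        exact absurd h (by simp)
end

section
/- Let GL = L(G;a_1,…,a_n) be a non-empty connected generalized line graph, and suppose that for every vertex v_i of G the quantity deg_G(v_i) + a_i is constant, equal to χ(GL) (i.e. GL is chromatically balanced). Then the largest adjacency eigenvalue of GL equals 2(χ(GL) − 1). -/
open Finset Matrix

section
variable {V : Type*} [Fintype V] [DecidableEq V] (G : SimpleGraph V) [DecidableRel G.Adj]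

lemma sum_edge_incidence (i : V) :
    ∑ f : G.edgeSet, (if i ∈ (f : Sym2 V) then (1:ℝ) else 0) = G.degree i := by
  classical
  rw [Finset.sum_boole]
  norm_num
  have e : {x : G.edgeSet // i ∈ (x : Sym2 V)} ≃ (G.incidenceSet i) :=
    ⟨fun x => ⟨x.1.1, x.1.2, x.2⟩, fun e => ⟨⟨e.1, e.2.1⟩, e.2.2⟩,
      fun _ => rfl, fun _ => rfl⟩
  rw [← Fintype.card_subtype]
  exact (Fintype.card_congr e).trans (G.card_incidenceSet_eq_degree i)

lemma sum_pair_mem {i j : V} (hij : i ≠ j) (g : V → ℝ) :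
    ∑ v : V, (if v ∈ (s(i,j) : Sym2 V) then g v else 0) = g i + g j := by
  classical
  rw [← Finset.sum_filter]
  have : Finset.univ.filter (fun v => v ∈ (s(i,j) : Sym2 V)) = {i, j} := by
    ext v; simp [Sym2.mem_iff]
  rw [this, Finset.sum_pair hij]

open Classical in
lemma genline_key (a : V → ℕ) (c : ℕ) (hbal : ∀ i : V, G.degree i + a i = c)
    (x : G.edgeSet ⊕ (Σ i : V, Fin (a i) × Bool)) :
    ∑ y, (if (G.GenLineGraph a).Adj x y then Sum.elim (fun _ => (2:ℝ)) (fun _ => 1) y else 0)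
      = (2*(c:ℝ) - 2) * Sum.elim (fun _ => (2:ℝ)) (fun _ => 1) x := by
  have hadj_ll : ∀ e f : G.edgeSet, (G.GenLineGraph a).Adj (Sum.inl e) (Sum.inl f) ↔
      (e ≠ f ∧ (((e : Sym2 V) : Set V) ∩ ((f : Sym2 V) : Set V)).Nonempty) := fun _ _ => Iff.rfl
  have hadj_lr : ∀ (e : G.edgeSet) (p : Σ i : V, Fin (a i) × Bool),
      (G.GenLineGraph a).Adj (Sum.inl e) (Sum.inr p) ↔ p.1 ∈ (e : Sym2 V) := fun _ _ => Iff.rfl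
  have hadj_rl : ∀ (p : Σ i : V, Fin (a i) × Bool) (e : G.edgeSet),
      (G.GenLineGraph a).Adj (Sum.inr p) (Sum.inl e) ↔ p.1 ∈ (e : Sym2 V) := fun _ _ => Iff.rfl
  have hadj_rr : ∀ (p q : Σ i : V, Fin (a i) × Bool),
      (G.GenLineGraph a).Adj (Sum.inr p) (Sum.inr q) ↔
        (p.1 = q.1 ∧ (p.2.1 : ℕ) ≠ (q.2.1 : ℕ)) := fun _ _ => Iff.rfl
  obtain (⟨e, he⟩ | ⟨i, k, b⟩) := x
  · -- edge vertex
    induction e using Sym2.ind with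
    | _ i j =>
    have hij : i ≠ j := G.ne_of_adj (G.mem_edgeSet.mp he)
    rw [Fintype.sum_sum_type]
    simp only [hadj_ll, hadj_lr, Sum.elim_inl, Sum.elim_inr]
    have h1 : ∀ f : G.edgeSet,
        (if ((⟨s(i,j), he⟩ : G.edgeSet) ≠ f ∧
            (((s(i,j) : Sym2 V) : Set V) ∩ ((f : Sym2 V) : Set V)).Nonempty) then (2:ℝ) else 0)
        = ((if i ∈ (f : Sym2 V) then (2:ℝ) else 0) + (if j ∈ (f : Sym2 V) then (2:ℝ) else 0))
          - (if f = (⟨s(i,j), he⟩ : G.edgeSet) then (4:ℝ) else 0) := by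
      intro f
      by_cases hfe : f = (⟨s(i,j), he⟩ : G.edgeSet)
      · subst hfe
        rw [if_neg (by rintro ⟨h, -⟩; exact h rfl), if_pos rfl,
          if_pos (by simp [Sym2.mem_iff]), if_pos (by simp [Sym2.mem_iff])]
        ring
      · have hnotboth : ¬ (i ∈ (f : Sym2 V) ∧ j ∈ (f : Sym2 V)) := by
          intro hb
          exact hfe (Subtype.ext ((Sym2.mem_and_mem_iff hij).mp hb))
        rw [if_neg hfe]
        by_cases hi : i ∈ (f : Sym2 V)
        · have hj : j ∉ (f : Sym2 V) := fun hj => hnotboth ⟨hi, hj⟩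
          rw [if_pos ⟨fun h => hfe h.symm, ⟨i, by simp [Sym2.mem_iff], hi⟩⟩,
            if_pos hi, if_neg hj]
          ring
        · by_cases hj : j ∈ (f : Sym2 V)
          · rw [if_pos ⟨fun h => hfe h.symm, ⟨j, by simp [Sym2.mem_iff], hj⟩⟩,
              if_neg hi, if_pos hj]
            ring
          · rw [if_neg, if_neg hi, if_neg hj]
            · ring
            · rintro ⟨-, v, hv1, hv2⟩
              rw [SetLike.mem_coe, Sym2.mem_iff] at hv1
              rcases hv1 with rfl | rfl
              · exact hi hv2
              · exact hj hv2
    rw [Finset.sum_congr rfl (fun f _ => h1 f)]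
    rw [Finset.sum_sub_distrib, Finset.sum_add_distrib]
    have h2 : ∀ v : V, ∑ f : G.edgeSet, (if v ∈ (f : Sym2 V) then (2:ℝ) else 0)
        = 2 * G.degree v := by
      intro v
      rw [← sum_edge_incidence G v, Finset.mul_sum]
      exact Finset.sum_congr rfl fun f _ => by split <;> ring
    rw [h2 i, h2 j, Finset.sum_ite_eq' Finset.univ (⟨s(i,j), he⟩ : G.edgeSet) (fun _ => (4:ℝ)),
      if_pos (Finset.mem_univ _)]
    -- CP part
    have h3 : ∑ p : (Σ i : V, Fin (a i) × Bool), (if p.1 ∈ (s(i,j) : Sym2 V) then (1:ℝ) else 0)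
        = 2 * a i + 2 * a j := by
      rw [← Finset.univ_sigma_univ, Finset.sum_sigma]
      have : ∀ v : V, ∑ _ : Fin (a v) × Bool, (if v ∈ (s(i,j) : Sym2 V) then (1:ℝ) else 0)
          = (if v ∈ (s(i,j) : Sym2 V) then (2 * a v : ℝ) else 0) := by
        intro v
        rw [Finset.sum_const]
        split <;> simp [Fintype.card_prod, mul_comm]
      rw [Finset.sum_congr rfl (fun v _ => this v), sum_pair_mem hij]
    rw [h3]
    have hbi := hbal i
    have hbj := hbal j
    have : (G.degree i : ℝ) + a i = c := by exact_mod_cast congrArg (Nat.cast : ℕ → ℝ) hbi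
    have : (G.degree j : ℝ) + a j = c := by exact_mod_cast congrArg (Nat.cast : ℕ → ℝ) hbj
    push_cast at *
    linarith
  · -- cocktail party vertex ⟨i, k, b⟩
    rw [Fintype.sum_sum_type]
    simp only [hadj_rl, hadj_rr, Sum.elim_inl, Sum.elim_inr]
    have h2 : ∑ f : G.edgeSet, (if i ∈ (f : Sym2 V) then (2:ℝ) else 0) = 2 * G.degree i := by
      rw [← sum_edge_incidence G i, Finset.mul_sum]
      exact Finset.sum_congr rfl fun f _ => by split <;> ring
    have h3 : ∑ q : (Σ i : V, Fin (a i) × Bool),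
        (if ((⟨i, k, b⟩ : Σ i : V, Fin (a i) × Bool).1 = q.1 ∧
            (((⟨i, k, b⟩ : Σ i : V, Fin (a i) × Bool).2.1 : ℕ) ≠ (q.2.1 : ℕ))) then (1:ℝ) else 0)
        = 2 * a i - 2 := by
      rw [← Finset.univ_sigma_univ, Finset.sum_sigma]
      have hinner : ∀ v : V, ∑ q : Fin (a v) × Bool,
          (if (i = v ∧ ((k : ℕ) ≠ (q.1 : ℕ))) then (1:ℝ) else 0)
          = (if i = v then (2 * a v - 2 : ℝ) else 0) := by
        intro v
        by_cases hiv : i = v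
        · subst hiv
          simp only [true_and, if_pos rfl]
          rw [Fintype.sum_prod_type_right]
          have : ∀ k' : Fin (a i), (if (k : ℕ) ≠ (k' : ℕ) then (1:ℝ) else 0)
              = 1 - (if k' = k then 1 else 0) := by
            intro k'
            by_cases h : k' = k
            · subst h; simp
            · rw [if_pos (fun hc => h (Fin.ext hc.symm)), if_neg h]; ring
          calc ∑ _ : Bool, ∑ k' : Fin (a i), (if (k:ℕ) ≠ (k':ℕ) then (1:ℝ) else 0)
              = ∑ _ : Bool, ∑ k' : Fin (a i), ((1:ℝ) - if k' = k then 1 else 0) := by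
                refine Finset.sum_congr rfl fun _ _ => Finset.sum_congr rfl fun k' _ => this k'
            _ = 2 * a i - 2 := by
                simp [Finset.sum_sub_distrib, Finset.sum_ite_eq' Finset.univ k (fun _ => (1:ℝ))]
        · simp [hiv]
      rw [Finset.sum_congr rfl (fun v _ => hinner v), Finset.sum_ite_eq Finset.univ i
        (fun v => (2 * a v - 2 : ℝ)), if_pos (Finset.mem_univ _)]
    rw [h2, h3]
    have hbi := hbal i
    have : (G.degree i : ℝ) + a i = c := by exact_mod_cast congrArg (Nat.cast : ℕ → ℝ) hbi
    linarith

end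

open Classical in
/-- If a non-empty connected generalized line graph `GL = L(G; a)` is chromatically
balanced, i.e. `deg_G(v_i) + a_i = χ(GL)` for every vertex `v_i` of `G`, then its largest
adjacency eigenvalue equals `2(χ(GL) − 1)`. -/
theorem chromatically_balanced_genLineGraph_lambdaMax {V : Type*} [Fintype V] [DecidableEq V]
    (G : SimpleGraph V) [DecidableRel G.Adj] (a : V → ℕ)
    (hne : ∃ x y, (G.GenLineGraph a).Adj x y)
    (hconn : (G.GenLineGraph a).Connected)
    (c : ℕ) (hc : (G.GenLineGraph a).chromaticNumber = c)
    (hbal : ∀ i : V, G.degree i + a i = c)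
    (lmax : ℝ)
    (hmax : (G.GenLineGraph a).IsAdjEigenvalue lmax ∧
      ∀ μ, (G.GenLineGraph a).IsAdjEigenvalue μ → μ ≤ lmax) :
    lmax = 2 * ((c : ℝ) - 1) := by
  obtain ⟨⟨w, hw0, hw⟩, hub⟩ := hmax
  set v₀ : (G.edgeSet ⊕ (Σ i : V, Fin (a i) × Bool)) → ℝ :=
    Sum.elim (fun _ => 2) (fun _ => 1) with hv₀
  have hv₀pos : ∀ x, 0 < v₀ x := by rintro (e | p) <;> norm_num [hv₀]
  have hAv : ∀ (u : (G.edgeSet ⊕ (Σ i : V, Fin (a i) × Bool)) → ℝ) x,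
      ((G.GenLineGraph a).adjMatrix ℝ *ᵥ u) x
        = ∑ y, (if (G.GenLineGraph a).Adj x y then u y else 0) := by
    intro u x
    simp [Matrix.mulVec, dotProduct, SimpleGraph.adjMatrix_apply, ite_mul]
  have heig : (G.GenLineGraph a).adjMatrix ℝ *ᵥ v₀ = (2*(c:ℝ)-2) • v₀ := by
    funext x
    rw [hAv, genline_key G a c hbal x]
    simp [hv₀]
  obtain ⟨x0, y0, hxy⟩ := hne
  have hc1 : (1:ℝ) ≤ c := by
    have h1 : 1 ≤ c := by
      rcases x0 with ⟨e, he⟩ | ⟨i, k, b⟩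
      · induction e using Sym2.ind with
        | _ i j =>
        have hdeg : 0 < G.degree i := by
          rw [G.degree_pos_iff_exists_adj]
          exact ⟨j, G.mem_edgeSet.mp he⟩
        have := hbal i
        omega
      · have := k.isLt
        have := hbal i
        omega
    exact_mod_cast h1
  have hv₀ne : v₀ ≠ 0 := by
    intro h
    have := congrFun h x0
    have hpos := hv₀pos x0
    rw [this] at hpos
    exact lt_irrefl _ hpos
  have hlow : 2*(c:ℝ) - 2 ≤ lmax := hub _ ⟨v₀, hv₀ne, heig⟩
  have hl0 : 0 ≤ lmax := by linarith
  have habs : ∀ x, lmax * |w x| ≤ ∑ y, (if (G.GenLineGraph a).Adj x y then |w y| else 0) := by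
    intro x
    have h1 : lmax * |w x| = |(lmax • w) x| := by
      simp [abs_mul, abs_of_nonneg hl0]
    rw [h1, ← hw, hAv]
    calc |∑ y, if (G.GenLineGraph a).Adj x y then w y else 0|
        ≤ ∑ y, |if (G.GenLineGraph a).Adj x y then w y else 0| :=
          Finset.abs_sum_le_sum_abs _ _
      _ = ∑ y, (if (G.GenLineGraph a).Adj x y then |w y| else 0) := by
          refine Finset.sum_congr rfl fun y _ => ?_
          split <;> simp
  set S : ℝ := ∑ x, v₀ x * |w x| with hS
  have hSpos : 0 < S := by
    obtain ⟨x1, hx1⟩ : ∃ x, w x ≠ 0 := Function.ne_iff.mp hw0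
    refine Finset.sum_pos' (fun x _ => ?_) ⟨x1, Finset.mem_univ _, ?_⟩
    · exact mul_nonneg (hv₀pos x).le (abs_nonneg _)
    · exact mul_pos (hv₀pos x1) (abs_pos.mpr hx1)
  have hchain : lmax * S ≤ (2*(c:ℝ)-2) * S := by
    calc lmax * S = ∑ x, v₀ x * (lmax * |w x|) := by
          rw [hS, Finset.mul_sum]
          exact Finset.sum_congr rfl fun x _ => by ring
      _ ≤ ∑ x, v₀ x * ∑ y, (if (G.GenLineGraph a).Adj x y then |w y| else 0) :=
          Finset.sum_le_sum fun x _ =>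
            mul_le_mul_of_nonneg_left (habs x) (hv₀pos x).le
      _ = ∑ x, ∑ y, (if (G.GenLineGraph a).Adj x y then v₀ x * |w y| else 0) := by
          refine Finset.sum_congr rfl fun x _ => ?_
          rw [Finset.mul_sum]
          exact Finset.sum_congr rfl fun y _ => by split <;> simp
      _ = ∑ y, ∑ x, (if (G.GenLineGraph a).Adj x y then v₀ x * |w y| else 0) :=
          Finset.sum_comm
      _ = ∑ y, (∑ x, (if (G.GenLineGraph a).Adj y x then v₀ x else 0)) * |w y| := by
          refine Finset.sum_congr rfl fun y _ => ?_
          rw [Finset.sum_mul]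
          refine Finset.sum_congr rfl fun x _ => ?_
          rw [(G.GenLineGraph a).adj_comm]
          split <;> simp
      _ = ∑ y, ((2*(c:ℝ)-2) * v₀ y) * |w y| := by
          refine Finset.sum_congr rfl fun y _ => ?_
          rw [genline_key G a c hbal y]
      _ = (2*(c:ℝ)-2) * S := by
          rw [hS, Finset.mul_sum]
          exact Finset.sum_congr rfl fun x _ => by ring
  have hupp : lmax ≤ 2*(c:ℝ) - 2 := le_of_mul_le_mul_right hchain hSpos
  have : lmax = 2*(c:ℝ) - 2 := le_antisymm hupp hlow
  rw [this]; ring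
end

section
/- The regular complete multipartite graph K_{m,…,m} with c parts of size m (c ≥ 2, m ≥ 1) is Hoffman colorable: its chromatic number c equals 1 − λ_max/λ_min, where λ_max = (c−1)m and λ_min = −m. -/
open Matrix Finset in
private lemma cm_adj_mulVec (c m : ℕ)
    [DecidableRel (((⊤ : SimpleGraph (Fin c)).comap Prod.fst : SimpleGraph (Fin c × Fin m))).Adj]
    (v : Fin c × Fin m → ℝ) (x : Fin c × Fin m) :
    ((((⊤ : SimpleGraph (Fin c)).comap Prod.fst).adjMatrix ℝ) *ᵥ v) x
      = ∑ j ∈ univ.erase x.1, ∑ b, v (j, b) := by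
  rw [SimpleGraph.adjMatrix_mulVec_apply]
  rw [show (((⊤ : SimpleGraph (Fin c)).comap Prod.fst).neighborFinset x)
      = (univ.erase x.1) ×ˢ (univ : Finset (Fin m)) by
    ext y
    simp [SimpleGraph.mem_neighborFinset, ne_comm, eq_comm]]
  rw [Finset.sum_product]

open Finset in
private lemma cm_eig_cases (c m : ℕ) (μ : ℝ)
    (h : ((⊤ : SimpleGraph (Fin c)).comap Prod.fst :
        SimpleGraph (Fin c × Fin m)).IsAdjEigenvalue μ) :
    μ = 0 ∨ μ = -(m : ℝ) ∨ μ = ((c : ℝ) - 1) * m := by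
  obtain ⟨v, hv0, hv⟩ := h
  set s : Fin c → ℝ := fun j => ∑ b, v (j, b) with hs
  set S : ℝ := ∑ j, s j with hS
  have key : ∀ i a, μ * v (i, a) = S - s i := by
    intro i a
    have h1 := congrFun hv (i, a)
    rw [cm_adj_mulVec] at h1
    simp only [Pi.smul_apply, smul_eq_mul] at h1
    rw [← h1, Finset.sum_erase_eq_sub (Finset.mem_univ i)]
  by_cases hμ : μ = 0
  · exact Or.inl hμ
  right
  have keys : ∀ i, μ * s i = (m : ℝ) * (S - s i) := by
    intro i
    calc μ * s i = ∑ b, μ * v (i, b) := by rw [hs, Finset.mul_sum]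
      _ = ∑ _b : Fin m, (S - s i) := by
          exact Finset.sum_congr rfl fun b _ => key i b
      _ = (m : ℝ) * (S - s i) := by
          simp [Finset.sum_const, nsmul_eq_mul, mul_sub]
  have htot : μ * S = (m : ℝ) * ((c : ℝ) * S - S) := by
    have h2 : ∑ i, μ * s i = ∑ i, (m : ℝ) * (S - s i) :=
      Finset.sum_congr rfl fun i _ => keys i
    rw [← Finset.mul_sum, ← Finset.mul_sum, Finset.sum_sub_distrib,
      Finset.sum_const, Finset.card_univ] at h2
    simpa [← hS, nsmul_eq_mul] using h2
  by_cases hSz : S = 0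
  · -- all eigen equation forces μ = -m
    by_cases hsz : ∀ i, s i = 0
    · exfalso
      apply hv0
      funext x
      have := key x.1 x.2
      rw [hSz, hsz x.1] at this
      have : μ * v (x.1, x.2) = 0 := by simpa using this
      have := (mul_eq_zero.mp this).resolve_left hμ
      simpa using this
    · push_neg at hsz
      obtain ⟨i, hi⟩ := hsz
      left
      have := keys i
      rw [hSz] at this
      have h3 : (μ + (m : ℝ)) * s i = 0 := by ring_nf; linarith [this]
      have := (mul_eq_zero.mp h3).resolve_right hi
      linarith
  · right
    have h4 : (μ - ((c : ℝ) - 1) * m) * S = 0 := by ring_nf; nlinarith [htot]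
    have := (mul_eq_zero.mp h4).resolve_right hSz
    linarith

open Finset in
private lemma cm_eig_max (c m : ℕ) (hc : 1 ≤ c) (hm : 1 ≤ m) :
    ((⊤ : SimpleGraph (Fin c)).comap Prod.fst :
        SimpleGraph (Fin c × Fin m)).IsAdjEigenvalue (((c : ℝ) - 1) * m) := by
  have hcpos : 0 < c := hc
  refine ⟨fun _ => 1, ?_, ?_⟩
  · intro h
    have := congrFun h (⟨0, hcpos⟩, ⟨0, hm⟩)
    simpa using this
  · funext x
    rw [cm_adj_mulVec]
    simp only [Finset.sum_const, Finset.card_univ, Fintype.card_fin,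
      Finset.card_erase_of_mem (Finset.mem_univ _), nsmul_eq_mul, mul_one,
      Pi.smul_apply, smul_eq_mul]
    push_cast [Nat.cast_sub hc]
    ring

open Finset in
private lemma cm_eig_min (c m : ℕ) (hc : 2 ≤ c) (hm : 1 ≤ m) :
    ((⊤ : SimpleGraph (Fin c)).comap Prod.fst :
        SimpleGraph (Fin c × Fin m)).IsAdjEigenvalue (-(m : ℝ)) := by
  set i0 : Fin c := ⟨0, by omega⟩
  set i1 : Fin c := ⟨1, by omega⟩
  have hne : i0 ≠ i1 := by simp [i0, i1, Fin.ext_iff]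
  set f : Fin c → ℝ := fun j => (if j = i0 then 1 else 0) - (if j = i1 then 1 else 0)
    with hf
  have hsumf : ∑ j, f j = 0 := by
    rw [hf]
    rw [Finset.sum_sub_distrib]
    simp
  refine ⟨fun x => f x.1, ?_, ?_⟩
  · intro h
    have := congrFun h (i0, ⟨0, hm⟩)
    simp [hf, hne] at this
  · funext x
    rw [cm_adj_mulVec]
    have hsb : ∀ j : Fin c, ∑ _b : Fin m, f j = (m : ℝ) * f j := by
      intro j; simp [Finset.sum_const, nsmul_eq_mul]
    calc (∑ j ∈ univ.erase x.1, ∑ _b : Fin m, f j)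
        = ∑ j ∈ univ.erase x.1, (m : ℝ) * f j :=
          Finset.sum_congr rfl fun j _ => hsb j
      _ = (∑ j, (m : ℝ) * f j) - (m : ℝ) * f x.1 :=
          Finset.sum_erase_eq_sub (Finset.mem_univ _)
      _ = -(m : ℝ) * f x.1 := by
          rw [← Finset.mul_sum, hsumf]; ring
      _ = (-(m : ℝ) • (fun x : Fin c × Fin m => f x.1)) x := by
          simp

open Finset in
private lemma cm_chrom (c m : ℕ) (hc : 2 ≤ c) (hm : 1 ≤ m) :
    ((⊤ : SimpleGraph (Fin c)).comap Prod.fst :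
        SimpleGraph (Fin c × Fin m)).chromaticNumber = c := by
  apply le_antisymm
  · have hcol : ((⊤ : SimpleGraph (Fin c)).comap Prod.fst :
        SimpleGraph (Fin c × Fin m)).Colorable c :=
      ⟨SimpleGraph.Coloring.mk Prod.fst fun h => h⟩
    exact hcol.chromaticNumber_le
  · have emb : (⊤ : SimpleGraph (Fin c)) ↪g
        ((⊤ : SimpleGraph (Fin c)).comap Prod.fst :
          SimpleGraph (Fin c × Fin m)) :=
      ⟨⟨fun i => (i, ⟨0, hm⟩), fun _ _ h => congrArg Prod.fst h⟩, Iff.rfl⟩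
    have := SimpleGraph.chromaticNumber_mono_of_hom emb.toHom
    rwa [SimpleGraph.chromaticNumber_top, Fintype.card_fin] at this

open Matrix in
open Classical in
/-- The complete multipartite graph `K_{m,…,m}` with `c ≥ 2` parts of size `m ≥ 1`
(vertices `Fin c × Fin m`, adjacent iff in distinct parts) is Hoffman colorable:
its chromatic number is `c`, `λ_max = (c−1)m`, `λ_min = −m`, and `c = 1 − λ_max/λ_min`. -/
theorem completeMultipartite_hoffman_colorable (c m : ℕ) (hc : 2 ≤ c) (hm : 1 ≤ m)
    (lmax lmin : ℝ)
    (hmax : ((⊤ : SimpleGraph (Fin c)).comap Prod.fst :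
        SimpleGraph (Fin c × Fin m)).IsAdjEigenvalue lmax ∧
      ∀ μ, ((⊤ : SimpleGraph (Fin c)).comap Prod.fst :
        SimpleGraph (Fin c × Fin m)).IsAdjEigenvalue μ → μ ≤ lmax)
    (hmin : ((⊤ : SimpleGraph (Fin c)).comap Prod.fst :
        SimpleGraph (Fin c × Fin m)).IsAdjEigenvalue lmin ∧
      ∀ μ, ((⊤ : SimpleGraph (Fin c)).comap Prod.fst :
        SimpleGraph (Fin c × Fin m)).IsAdjEigenvalue μ → lmin ≤ μ) :
    ((⊤ : SimpleGraph (Fin c)).comap Prod.fst :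
        SimpleGraph (Fin c × Fin m)).chromaticNumber = c ∧
      lmax = ((c : ℝ) - 1) * m ∧ lmin = -(m : ℝ) ∧ (c : ℝ) = 1 - lmax / lmin := by
  have hc' : (2 : ℝ) ≤ (c : ℝ) := by exact_mod_cast hc
  have hm' : (1 : ℝ) ≤ (m : ℝ) := by exact_mod_cast hm
  have hmaxge : ((c : ℝ) - 1) * m ≤ lmax := hmax.2 _ (cm_eig_max c m (by omega) hm)
  have hminle : lmin ≤ -(m : ℝ) := hmin.2 _ (cm_eig_min c m hc hm)
  have hlmax : lmax = ((c : ℝ) - 1) * m := by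
    rcases cm_eig_cases c m lmax hmax.1 with h | h | h
    · nlinarith
    · nlinarith
    · exact h
  have hlmin : lmin = -(m : ℝ) := by
    rcases cm_eig_cases c m lmin hmin.1 with h | h | h
    · nlinarith
    · exact h
    · nlinarith
  refine ⟨cm_chrom c m hc hm, hlmax, hlmin, ?_⟩
  rw [hlmax, hlmin]
  have hmne : (m : ℝ) ≠ 0 := by linarith
  rw [div_neg, mul_div_assoc, div_self hmne, mul_one]
  ring
end

section
/- Let H be a graph on 8 vertices and F a subset of its edges, and let G be the graph obtained from the line graph L(H) by Seidel switching with respect to F. Then every coclique C in G satisfies |C| ≤ 4. -/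
/-- Seidel switching of a graph `K` with respect to a vertex set `X`: adjacency between
pairs with exactly one endpoint in `X` is complemented, other adjacencies are kept. -/
def SimpleGraph.seidelSwitch {V : Type*} (K : SimpleGraph V) (X : Set V) :
    SimpleGraph V where
  Adj u v := u ≠ v ∧ (K.Adj u v ↔ ¬ Xor' (u ∈ X) (v ∈ X))
  symm := ⟨fun u v h => ⟨h.1.symm, by unfold Xor' at *; rw [K.adj_comm, xor_comm]; exact h.2⟩⟩
  loopless := ⟨fun v h => h.1 rfl⟩

private lemma sym2_out_mk {α : Type*} (e : Sym2 α) : e = s(e.out.1, e.out.2) := by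
  rw [Sym2.mk, Prod.mk.eta, e.out_eq]

private lemma sym2_mem_out {α : Type*} (e : Sym2 α) (v : α) :
    v ∈ e ↔ v = e.out.1 ∨ v = e.out.2 := by
  conv_lhs => rw [sym2_out_mk e]
  exact Sym2.mem_iff

/-- If `G` is obtained from the line graph of a graph `H` on eight vertices by Seidel
switching with respect to a set `F` of edges of `H`, then every coclique of `G` has at
most `4` vertices. -/
theorem coclique_le_four_of_switched_lineGraph {W : Type*} [Fintype W]
    (hW : Fintype.card W = 8) (H : SimpleGraph W) (F : Set H.edgeSet)
    (C : Finset H.edgeSet)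
    (hC : (C : Set H.edgeSet).Pairwise fun e f => ¬ (H.lineGraph.seidelSwitch F).Adj e f) :
    C.card ≤ 4 := by
  classical
  -- endpoints of an edge as a finset
  set ends : H.edgeSet → Finset W := fun e => {(e : Sym2 W).out.1, (e : Sym2 W).out.2} with hends
  have mem_ends : ∀ (e : H.edgeSet) (v : W), v ∈ ends e ↔ v ∈ (e : Sym2 W) := by
    intro e v
    simp [hends, sym2_mem_out]
  have card_ends : ∀ e : H.edgeSet, (ends e).card = 2 := by
    intro e
    have hd : ¬ (e : Sym2 W).IsDiag := H.not_isDiag_of_mem_edgeSet e.2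
    have : (e : Sym2 W).out.1 ≠ (e : Sym2 W).out.2 := by
      intro h
      apply hd
      rw [sym2_out_mk (e : Sym2 W)]
      exact (Sym2.mk_isDiag_iff).2 h
    simp [hends, Finset.card_insert_of_notMem, this]
  -- the key adjacency characterization
  have key : ∀ e ∈ C, ∀ f ∈ C, e ≠ f →
      (H.lineGraph.Adj e f ↔ Xor' (e ∈ F) (f ∈ F)) := by
    intro e he f hf hef
    have h := hC he hf hef
    simp only [SimpleGraph.seidelSwitch, not_and] at h
    have h2 := h hef
    simp only [Xor', Xor] at h2 ⊢
    tauto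
  have noshare : ∀ e ∈ C, ∀ f ∈ C, e ≠ f → ((e ∈ F) ↔ (f ∈ F)) →
      ∀ v : W, ¬ (v ∈ (e : Sym2 W) ∧ v ∈ (f : Sym2 W)) := by
    intro e he f hf hef hFF v hv
    have hadj : H.lineGraph.Adj e f :=
      SimpleGraph.lineGraph_adj_iff_exists.2 ⟨hef, v, hv.1, hv.2⟩
    have := (key e he f hf hef).1 hadj
    rw [Xor', Xor] at this
    tauto
  have share : ∀ e ∈ C, ∀ f ∈ C, e ≠ f → Xor' (e ∈ F) (f ∈ F) →
      ∃ v : W, v ∈ (e : Sym2 W) ∧ v ∈ (f : Sym2 W) := by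
    intro e he f hf hef hx
    have hadj := (key e he f hf hef).2 hx
    exact (SimpleGraph.lineGraph_adj_iff_exists.1 hadj).2
  -- matching bound: a set of pairwise vertex-disjoint edges has size ≤ 4
  have matching_le : ∀ S : Finset H.edgeSet,
      (∀ e ∈ S, ∀ f ∈ S, e ≠ f → ∀ v : W, ¬ (v ∈ (e : Sym2 W) ∧ v ∈ (f : Sym2 W))) →
      S.card ≤ 4 := by
    intro S hS
    have hdisj : ∀ e ∈ S, ∀ f ∈ S, e ≠ f → Disjoint (ends e) (ends f) := by
      intro e he f hf hef
      rw [Finset.disjoint_left]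
      intro v hve hvf
      exact hS e he f hf hef v ⟨(mem_ends e v).1 hve, (mem_ends f v).1 hvf⟩
    have h1 : (S.biUnion ends).card = ∑ e ∈ S, (ends e).card :=
      Finset.card_biUnion hdisj
    have h2 : ∑ e ∈ S, (ends e).card = 2 * S.card := by
      rw [Finset.sum_congr rfl (fun e _ => card_ends e)]
      simp [mul_comm]
    have h3 : (S.biUnion ends).card ≤ 8 := by
      rw [← hW]
      exact Finset.card_le_card (Finset.subset_univ _)
    omega
  -- bound ≤ 2 for a pairwise-disjoint family all meeting a fixed edge b
  have le_two : ∀ (S : Finset H.edgeSet) (b : H.edgeSet),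
      (∀ e ∈ S, ∀ f ∈ S, e ≠ f → ∀ v : W, ¬ (v ∈ (e : Sym2 W) ∧ v ∈ (f : Sym2 W))) →
      (∀ e ∈ S, ∃ v : W, v ∈ (e : Sym2 W) ∧ v ∈ (b : Sym2 W)) →
      S.card ≤ 2 := by
    intro S b hdisj hmeet
    have : S.card ≤ (ends b).card := by
      refine Finset.card_le_card_of_injOn
        (fun e => if h : ∃ v : W, v ∈ (e : Sym2 W) ∧ v ∈ (b : Sym2 W) then h.choose else
          (b : Sym2 W).out.1) ?_ ?_
      · intro e he
        by_cases h : ∃ v : W, v ∈ (e : Sym2 W) ∧ v ∈ (b : Sym2 W)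
        · simp only [dif_pos h]
          exact (mem_ends b _).2 h.choose_spec.2
        · exact absurd (hmeet e he) h
      · intro e he f hf hef
        by_contra hne
        have heh := hmeet e he
        have hfh := hmeet f hf
        simp only [dif_pos heh, dif_pos hfh] at hef
        exact hdisj e he f hf hne heh.choose
          ⟨heh.choose_spec.1, hef ▸ hfh.choose_spec.1⟩
    rwa [card_ends b] at this
  -- split C into edges in F and not in F
  set A := C.filter (fun e => e ∈ F) with hA
  set B := C.filter (fun e => e ∉ F) with hB
  have hAC : ∀ e ∈ A, e ∈ C := fun e he => (Finset.mem_filter.1 he).1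
  have hBC : ∀ e ∈ B, e ∈ C := fun e he => (Finset.mem_filter.1 he).1
  have hAF : ∀ e ∈ A, e ∈ F := fun e he => (Finset.mem_filter.1 he).2
  have hBF : ∀ e ∈ B, e ∉ F := fun e he => (Finset.mem_filter.1 he).2
  have hcard : A.card + B.card = C.card := Finset.card_filter_add_card_filter_not _
  have Adisj : ∀ e ∈ A, ∀ f ∈ A, e ≠ f → ∀ v : W,
      ¬ (v ∈ (e : Sym2 W) ∧ v ∈ (f : Sym2 W)) := fun e he f hf hef =>
    noshare e (hAC e he) f (hAC f hf) hef (iff_of_true (hAF e he) (hAF f hf))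
  have Bdisj : ∀ e ∈ B, ∀ f ∈ B, e ≠ f → ∀ v : W,
      ¬ (v ∈ (e : Sym2 W) ∧ v ∈ (f : Sym2 W)) := fun e he f hf hef =>
    noshare e (hBC e he) f (hBC f hf) hef (iff_of_false (hBF e he) (hBF f hf))
  rcases Finset.eq_empty_or_nonempty A with hAe | ⟨a, ha⟩
  · have : C.card ≤ 4 := by
      have := matching_le B Bdisj
      rw [hAe] at hcard
      simp at hcard
      omega
    exact this
  rcases Finset.eq_empty_or_nonempty B with hBe | ⟨b, hb⟩
  · have := matching_le A Adisj
    rw [hBe] at hcard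
    simp at hcard
    omega
  · have habne : ∀ e ∈ A, ∀ f ∈ B, e ≠ f := by
      intro e he f hf h
      exact hBF f hf (h ▸ hAF e he)
    have hAle : A.card ≤ 2 := by
      apply le_two A b Adisj
      intro e he
      exact share e (hAC e he) b (hBC b hb) (habne e he b hb)
        (Or.inl ⟨hAF e he, hBF b hb⟩)
    have hBle : B.card ≤ 2 := by
      apply le_two B a Bdisj
      intro e he
      obtain ⟨v, hv1, hv2⟩ := share a (hAC a ha) e (hBC e he) (habne a ha e he)
        (Or.inl ⟨hAF a ha, hBF e he⟩)
      exact ⟨v, hv2, hv1⟩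
    omega
end

section
/- Any graph admitting an E_8-representation has smallest adjacency eigenvalue at least −2. -/
/-- The `E₈` root system: vectors in `ℤ⁸` with two coordinates `±2` and the rest `0`,
together with the `±1`-vectors having an even number of `−1` coordinates. -/
def E8 : Set (Fin 8 → ℤ) :=
  {x | (∃ i j : Fin 8, i ≠ j ∧ (x i = 2 ∨ x i = -2) ∧ (x j = 2 ∨ x j = -2) ∧
          ∀ k, k ≠ i → k ≠ j → x k = 0) ∨
       ((∀ k, x k = 1 ∨ x k = -1) ∧
          Even (Finset.univ.filter fun k => x k = -1).card)}

/-- An `E₈`-representation of a graph: an injective map to `E₈` sending adjacent vertices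
to vectors with inner product `4` and non-adjacent vertices to orthogonal vectors. -/
def SimpleGraph.IsE8Rep {V : Type*} (G : SimpleGraph V) (f : V → Fin 8 → ℤ) : Prop :=
  Function.Injective f ∧ (∀ v, f v ∈ E8) ∧
    ∀ u v : V, u ≠ v →
      (G.Adj u v → ∑ i, f u i * f v i = 4) ∧ (¬ G.Adj u v → ∑ i, f u i * f v i = 0)

/-- The cone over a graph `G`: a universal vertex (`none`) is added to `G`. -/
def SimpleGraph.coneGraph {V : Type*} (G : SimpleGraph V) : SimpleGraph (Option V) where
  Adj x y := match x, y with
    | none, none => False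
    | none, some _ => True
    | some _, none => True
    | some u, some v => G.Adj u v
  symm := ⟨by
    rintro (_ | u) (_ | v) h
    · exact h
    · trivial
    · trivial
    · exact h.symm⟩
  loopless := ⟨by
    rintro (_ | u) h
    · exact h
    · exact G.irrefl h⟩

lemma E8_norm {x : Fin 8 → ℤ} (hx : x ∈ E8) : ∑ i, x i * x i = 8 := by
  rcases hx with ⟨i, j, hij, hi, hj, hz⟩ | ⟨h1, _⟩
  · have h : ∀ k, x k * x k = (if k = i then 4 else 0) + (if k = j then 4 else 0) := by
      intro k
      by_cases hki : k = i
      · subst hki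
        rw [if_pos rfl, if_neg hij]
        rcases hi with h | h <;> rw [h] <;> ring
      · by_cases hkj : k = j
        · subst hkj
          rw [if_neg hki, if_pos rfl]
          rcases hj with h | h <;> rw [h] <;> ring
        · rw [hz k hki hkj, if_neg hki, if_neg hkj]; ring
    simp only [h, Finset.sum_add_distrib, Finset.sum_ite_eq', Finset.mem_univ, if_pos]
    norm_num
  · have h : ∀ k, x k * x k = 1 := by
      intro k; rcases h1 k with h | h <;> rw [h] <;> ring
    simp [h]

/-- Any graph admitting an `E₈`-representation has smallest adjacency eigenvalue at
least `−2`: every adjacency eigenvalue is `≥ −2`. -/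
theorem E8Rep_smallest_eigenvalue_ge_neg_two {V : Type*} [Fintype V]
    (G : SimpleGraph V) (f : V → Fin 8 → ℤ) (hf : G.IsE8Rep f) :
    ∀ μ : ℝ, G.IsAdjEigenvalue μ → -2 ≤ μ := by
  obtain ⟨hinj, hmem, hip⟩ := hf
  rintro μ ⟨x, hx0, hxe⟩
  set g : V → Fin 8 → ℝ := fun v i => (f v i : ℝ) with hg
  classical
  have hc : ∀ u w, ∑ i, g u i * g w i =
      4 * G.adjMatrix ℝ u w + if u = w then 8 else 0 := by
    intro u w
    by_cases huw : u = w
    · subst huw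
      have h8 := E8_norm (hmem u)
      have : ∑ i, g u i * g u i = ((∑ i, f u i * f u i : ℤ) : ℝ) := by
        push_cast [hg]; rfl
      rw [this, h8]
      simp
    · by_cases hadj : G.Adj u w
      · have h4 := (hip u w huw).1 hadj
        have : ∑ i, g u i * g w i = ((∑ i, f u i * f w i : ℤ) : ℝ) := by
          push_cast [hg]; rfl
        rw [this, h4]
        simp [hadj, huw]
      · have h0 := (hip u w huw).2 hadj
        have : ∑ i, g u i * g w i = ((∑ i, f u i * f w i : ℤ) : ℝ) := by
          push_cast [hg]; rfl
        rw [this, h0]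
        simp [hadj, huw]
  have heig : ∀ u, ∑ w, G.adjMatrix ℝ u w * x w = μ * x u := by
    intro u
    have := congrFun hxe u
    simpa [Matrix.mulVec, dotProduct, ite_mul] using this
  have key : ∑ i, (∑ u, x u * g u i)^2 = (4*μ + 8) * ∑ u, x u * x u := by
    have expand : ∑ i, (∑ u, x u * g u i)^2
        = ∑ u, ∑ w, (x u * x w) * ∑ i, g u i * g w i := by
      simp_rw [sq, Finset.sum_mul_sum, Finset.mul_sum]
      rw [Finset.sum_comm]
      refine Finset.sum_congr rfl fun u _ => ?_
      rw [Finset.sum_comm]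
      refine Finset.sum_congr rfl fun w _ => ?_
      refine Finset.sum_congr rfl fun i _ => ?_
      ring
    rw [expand]
    have step : ∀ u, ∑ w, (x u * x w) * ∑ i, g u i * g w i
        = 4 * μ * (x u * x u) + 8 * (x u * x u) := by
      intro u
      simp_rw [hc]
      rw [show (∑ w, (x u * x w) * (4 * G.adjMatrix ℝ u w + if u = w then 8 else 0))
          = 4 * x u * (∑ w, G.adjMatrix ℝ u w * x w)
            + ∑ w, (if u = w then 8 * (x u * x w) else 0) from by
        rw [Finset.mul_sum, ← Finset.sum_add_distrib]
        refine Finset.sum_congr rfl fun w _ => ?_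
        by_cases h : u = w <;> simp [h] <;> ring]
      rw [heig u, Finset.sum_ite_eq, if_pos (Finset.mem_univ u)]
      ring
    simp_rw [step]
    rw [Finset.sum_add_distrib, ← Finset.mul_sum, ← Finset.mul_sum]
    ring
  have hnn : 0 ≤ ∑ i, (∑ u, x u * g u i)^2 :=
    Finset.sum_nonneg fun i _ => sq_nonneg _
  obtain ⟨u, hu⟩ := Function.ne_iff.mp hx0
  have hpos : 0 < ∑ u, x u * x u :=
    Finset.sum_pos' (fun v _ => mul_self_nonneg _)
      ⟨u, Finset.mem_univ u, mul_self_pos.mpr (by simpa using hu)⟩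
  rw [key] at hnn
  nlinarith
end

section
/- Let G be a k-regular graph on n vertices with smallest adjacency eigenvalue at least −2 and 2n = 3(k+2), and let C be a coclique of size 3 in G. If G has at least one edge, then the smallest eigenvalue of G is exactly −2, every vertex outside C is adjacent to exactly 2 vertices of C, and the induced subgraph G \ C is (k−2)-regular on n−3 vertices with smallest eigenvalue at least −2 and 2(n−3) = 3((k−2)+2). -/
open Matrix in
lemma adjMatrix_congr {V : Type*} [Fintype V] (G : SimpleGraph V)
    (h1 h2 : DecidableRel G.Adj) :
    @SimpleGraph.adjMatrix ℝ V G h1 _ _ = @SimpleGraph.adjMatrix ℝ V G h2 _ _ := by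
  ext i j
  by_cases h : G.Adj i j <;> simp [h]

open Matrix in
/-- If all adjacency eigenvalues are `≥ -2`, then `A + 2·1` is positive semidefinite. -/
lemma adjB_posSemidef {V : Type*} [Fintype V] [DecidableEq V]
    (G : SimpleGraph V) [DecidableRel G.Adj]
    (hgem2 : ∀ μ : ℝ, G.IsAdjEigenvalue μ → -2 ≤ μ) :
    (G.adjMatrix ℝ + (2 : ℝ) • 1).PosSemidef := by
  have hB : (G.adjMatrix ℝ + (2 : ℝ) • 1).IsHermitian := by
    unfold Matrix.IsHermitian
    rw [Matrix.conjTranspose_add, Matrix.conjTranspose_smul]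
    congr 1
    · ext i j
      simp [Matrix.conjTranspose_apply, SimpleGraph.adjMatrix_apply, G.adj_comm i j]
    · simp
  apply (Matrix.IsHermitian.posSemidef_iff_eigenvalues_nonneg hB).mpr
  intro i
  have hv := hB.mulVec_eigenvectorBasis i
  have hvne : (⇑(hB.eigenvectorBasis i) : V → ℝ) ≠ 0 := by
    intro h
    apply hB.eigenvectorBasis.orthonormal.ne_zero i
    ext j
    exact congrFun h j
  have hAv : G.adjMatrix ℝ *ᵥ ⇑(hB.eigenvectorBasis i)
      = (hB.eigenvalues i - 2) • ⇑(hB.eigenvectorBasis i) := by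
    have : (G.adjMatrix ℝ + (2 : ℝ) • 1) *ᵥ ⇑(hB.eigenvectorBasis i)
        = G.adjMatrix ℝ *ᵥ ⇑(hB.eigenvectorBasis i) + (2 : ℝ) • ⇑(hB.eigenvectorBasis i) := by
      rw [Matrix.add_mulVec, Matrix.smul_mulVec, Matrix.one_mulVec]
    rw [this] at hv
    rw [sub_smul, ← hv]
    abel
  have h2 : G.IsAdjEigenvalue (hB.eigenvalues i - 2) := by
    refine ⟨_, hvne, ?_⟩
    convert hAv using 2
    exact adjMatrix_congr G _ _
  have := hgem2 _ h2
  rw [Pi.zero_apply]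
  linarith

/-- Summing a function vanishing on `C` over `V` equals summing over the complement subtype. -/
lemma sum_off_finset {V : Type*} [Fintype V] [DecidableEq V] (C : Finset V) (F : V → ℝ)
    (h : ∀ u ∈ C, F u = 0) :
    ∑ u : V, F u = ∑ u : {x : V // x ∉ C}, F ↑u := by
  classical
  rw [← Finset.sum_subtype (Finset.univ.filter fun x => x ∉ C) (by simp) F]
  rw [Finset.sum_filter_of_ne]
  intro x _ hx hxC
  exact hx (h x hxC)

open Matrix in
open Classical in
/-- Let `G` be a `k`-regular graph on `n` vertices with all adjacency eigenvalues `≥ −2`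
and `2n = 3(k+2)`, having at least one edge, and let `C` be a coclique of size `3`.
Then `−2` is an eigenvalue of `G` (so the smallest eigenvalue is exactly `−2`), every
vertex outside `C` has exactly `2` neighbors in `C`, and the induced subgraph `G \ C` is
`(k−2)`-regular on `n−3` vertices with all eigenvalues `≥ −2` and `2(n−3) = 3((k−2)+2)`. -/
theorem coclique_removal_G3' {V : Type*} [Fintype V] [DecidableEq V]
    (G : SimpleGraph V) [DecidableRel G.Adj]
    (k : ℕ) (hreg : G.IsRegularOfDegree k)
    (hgem2 : ∀ μ : ℝ, G.IsAdjEigenvalue μ → -2 ≤ μ)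
    (hnk : 2 * Fintype.card V = 3 * (k + 2))
    (C : Finset V) (hCcard : C.card = 3)
    (hC : (C : Set V).Pairwise fun u v => ¬ G.Adj u v)
    (hne : ∃ u v : V, G.Adj u v) :
    G.IsAdjEigenvalue (-2) ∧
    (∀ v ∉ C, (C.filter fun u => G.Adj v u).card = 2) ∧
    (G.comap (Subtype.val : {v : V // v ∉ C} → V)).IsRegularOfDegree (k - 2) ∧
    Fintype.card {v : V // v ∉ C} = Fintype.card V - 3 ∧
    (∀ μ : ℝ, (G.comap (Subtype.val : {v : V // v ∉ C} → V)).IsAdjEigenvalue μ → -2 ≤ μ) ∧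
    2 * (Fintype.card V - 3) = 3 * ((k - 2) + 2) := by
  have hk0 : 0 < k := by
    obtain ⟨a, b, hab⟩ := hne
    have hb : b ∈ G.neighborFinset a := by simpa [SimpleGraph.mem_neighborFinset] using hab
    have := Finset.card_pos.mpr ⟨b, hb⟩
    have hdeg := hreg a
    unfold SimpleGraph.IsRegularOfDegree at hdeg
    rw [SimpleGraph.degree] at hdeg
    omega
  have hk2 : 2 ≤ k := by omega
  have hn6 : 6 ≤ Fintype.card V := by omega
  set x : V → ℝ := fun v => if v ∈ C then -(k : ℝ) else 2 with hx
  set d : V → ℕ := fun v => (C.filter fun u => G.Adj v u).card with hd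
  have hrow : ∀ v : V, ∑ u ∈ G.neighborFinset v, x u = 2*k - (k+2) * (d v : ℝ) := by
    intro v
    have hsplit := Finset.sum_filter_add_sum_filter_not (G.neighborFinset v) (· ∈ C) x
    have h1 : ((G.neighborFinset v).filter (· ∈ C)) = C.filter (fun u => G.Adj v u) := by
      ext u; simp [SimpleGraph.mem_neighborFinset, and_comm]
    have hcards := Finset.card_filter_add_card_filter_not (s := G.neighborFinset v)
      (p := (· ∈ C))
    rw [h1] at hcards
    have hdegv : (G.neighborFinset v).card = k := hreg v
    rw [hdegv] at hcards
    have hc1 : ∑ u ∈ (G.neighborFinset v).filter (· ∈ C), x u = (d v : ℝ) * (-(k:ℝ)) := by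
      rw [h1, hd]
      rw [Finset.sum_congr rfl (fun u hu => show x u = -(k:ℝ) by
        simp [hx, (Finset.mem_filter.mp hu).1])]
      rw [Finset.sum_const, nsmul_eq_mul]
    have hc2 : ∑ u ∈ (G.neighborFinset v).filter (· ∉ C), x u
        = (((G.neighborFinset v).filter (· ∉ C)).card : ℝ) * 2 := by
      rw [Finset.sum_congr rfl (fun u hu => show x u = 2 by
        simp [hx, (Finset.mem_filter.mp hu).2])]
      rw [Finset.sum_const, nsmul_eq_mul]
    have hcast : ((((G.neighborFinset v).filter (· ∉ C)).card : ℝ)) = (k : ℝ) - (d v : ℝ) := by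
      have : (d v) + ((G.neighborFinset v).filter (· ∉ C)).card = k := hcards
      have := congrArg (fun m : ℕ => (m : ℝ)) this
      push_cast at this
      linarith
    rw [← hsplit, hc1, hc2, hcast]
    ring
  have hdC : ∀ u ∈ C, d u = 0 := by
    intro u hu
    rw [hd]
    rw [Finset.card_eq_zero, Finset.filter_eq_empty_iff]
    intro w hw
    by_cases h : w = u
    · subst h; exact G.irrefl
    · exact hC hu hw (Ne.symm h)
  have hcompl : (Finset.univ.filter (· ∉ C)).card = Fintype.card V - 3 := by
    have : (Finset.univ.filter (· ∉ C)) = Cᶜ := by ext u; simp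
    rw [this, Finset.card_compl, hCcard]
  have hunivC : (Finset.univ.filter (· ∈ C)) = C := by ext u; simp
  have hsum_x : ∑ v : V, x v = 0 := by
    rw [← Finset.sum_filter_add_sum_filter_not Finset.univ (· ∈ C) x]
    have e1 : ∑ v ∈ Finset.univ.filter (· ∈ C), x v = 3 * (-(k:ℝ)) := by
      rw [hunivC]
      rw [Finset.sum_congr rfl (fun u hu => show x u = -(k:ℝ) by simp [hx, hu])]
      rw [Finset.sum_const, hCcard, nsmul_eq_mul]
      norm_num
    have e2 : ∑ v ∈ Finset.univ.filter (· ∉ C), x v = ((Fintype.card V - 3 : ℕ) : ℝ) * 2 := by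
      rw [Finset.sum_congr rfl (fun u hu => show x u = 2 by
        simp [hx, (Finset.mem_filter.mp hu).2])]
      rw [Finset.sum_const, hcompl, nsmul_eq_mul]
    rw [e1, e2]
    have h3 : ((Fintype.card V - 3 : ℕ) : ℝ) * 2 = 3 * (k : ℝ) := by
      have : 2 * (Fintype.card V - 3) = 3 * k := by omega
      have := congrArg (fun m : ℕ => (m : ℝ)) this
      push_cast at this
      linarith
    linarith
  have hsum_xd : ∑ v : V, x v * (d v : ℝ) = 6 * k := by
    have step1 : ∀ v : V, x v * (d v : ℝ) = ∑ u ∈ C, (if G.Adj v u then x v else 0) := by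
      intro v
      have : (d v : ℝ) = ∑ u ∈ C, (if G.Adj v u then (1:ℝ) else 0) := by
        rw [Finset.sum_boole, hd]
      rw [this, Finset.mul_sum]
      exact Finset.sum_congr rfl fun u _ => by by_cases h : G.Adj v u <;> simp [h]
    rw [Finset.sum_congr rfl fun v _ => step1 v, Finset.sum_comm]
    have inner : ∀ u ∈ C, ∑ v : V, (if G.Adj v u then x v else 0) = 2 * (k:ℝ) := by
      intro u hu
      have : ∑ v : V, (if G.Adj v u then x v else 0)
          = ∑ v ∈ Finset.univ.filter (fun v => G.Adj v u), x v := by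
        rw [Finset.sum_filter]
      rw [this]
      have : Finset.univ.filter (fun v => G.Adj v u) = G.neighborFinset u := by
        ext w; simp [SimpleGraph.mem_neighborFinset, G.adj_comm]
      rw [this, hrow u, hdC u hu]
      push_cast
      ring
    rw [Finset.sum_congr rfl inner, Finset.sum_const, hCcard, nsmul_eq_mul]
    ring
  have hxx : ∑ v : V, x v * x v = 3 * (k:ℝ)^2 + 6 * k := by
    rw [← Finset.sum_filter_add_sum_filter_not Finset.univ (· ∈ C) (fun v => x v * x v)]
    have e1 : ∑ v ∈ Finset.univ.filter (· ∈ C), x v * x v = 3 * (k:ℝ)^2 := by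
      rw [hunivC]
      rw [Finset.sum_congr rfl (fun u hu => show x u * x u = (k:ℝ)^2 by
        simp [hx, hu]; ring)]
      rw [Finset.sum_const, hCcard, nsmul_eq_mul]
      norm_num
    have e2 : ∑ v ∈ Finset.univ.filter (· ∉ C), x v * x v = ((Fintype.card V - 3 : ℕ) : ℝ) * 4 := by
      rw [Finset.sum_congr rfl (fun u hu => show x u * x u = 4 by
        simp [hx, (Finset.mem_filter.mp hu).2]; norm_num)]
      rw [Finset.sum_const, hcompl, nsmul_eq_mul]
    have h3 : ((Fintype.card V - 3 : ℕ) : ℝ) * 2 = 3 * (k : ℝ) := by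
      have : 2 * (Fintype.card V - 3) = 3 * k := by omega
      have := congrArg (fun m : ℕ => (m : ℝ)) this
      push_cast at this
      linarith
    rw [e1, e2]
    linarith
  have hAxx : x ⬝ᵥ (G.adjMatrix ℝ *ᵥ x) = -(((k:ℝ)+2) * (6*k)) := by
    have : x ⬝ᵥ (G.adjMatrix ℝ *ᵥ x) = ∑ v : V, x v * (2*(k:ℝ) - ((k:ℝ)+2) * (d v : ℝ)) := by
      refine Finset.sum_congr rfl fun v _ => ?_
      rw [SimpleGraph.adjMatrix_mulVec_apply, hrow v]
    rw [this]
    have : ∑ v : V, x v * (2*(k:ℝ) - ((k:ℝ)+2) * (d v : ℝ))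
        = 2*(k:ℝ) * (∑ v : V, x v) - ((k:ℝ)+2) * (∑ v : V, x v * (d v : ℝ)) := by
      rw [Finset.mul_sum, Finset.mul_sum, ← Finset.sum_sub_distrib]
      exact Finset.sum_congr rfl fun v _ => by ring
    rw [this, hsum_x, hsum_xd]
    ring
  have hq0 : dotProduct (star x) ((G.adjMatrix ℝ + (2:ℝ) • 1) *ᵥ x) = 0 := by
    have hstar : star x = x := by funext v; exact star_trivial _
    rw [hstar, Matrix.add_mulVec, Matrix.smul_mulVec, Matrix.one_mulVec,
      dotProduct_add, hAxx]
    have : x ⬝ᵥ ((2:ℝ) • x) = 2 * ∑ v : V, x v * x v := by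
      rw [dotProduct_smul]
      rw [smul_eq_mul]
      congr 1
    rw [this, hxx]
    ring
  have hBx : (G.adjMatrix ℝ + (2:ℝ) • 1) *ᵥ x = 0 :=
    ((adjB_posSemidef G hgem2).dotProduct_mulVec_zero_iff x).mp hq0
  have hrow0 : ∀ v : V, 2*(k:ℝ) - ((k:ℝ)+2) * (d v : ℝ) + 2 * x v = 0 := by
    intro v
    have := congrFun hBx v
    rw [Matrix.add_mulVec, Matrix.smul_mulVec, Matrix.one_mulVec] at this
    have h2 : (G.adjMatrix ℝ *ᵥ x) v = 2*(k:ℝ) - ((k:ℝ)+2) * (d v : ℝ) := by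
      rw [SimpleGraph.adjMatrix_mulVec_apply, hrow v]
    simpa [h2, Pi.smul_apply, smul_eq_mul, two_mul] using this
  -- part 2 : every vertex outside C has exactly 2 neighbors in C
  have part2 : ∀ v ∉ C, d v = 2 := by
    intro v hv
    have h := hrow0 v
    have hxv : x v = 2 := by simp [hx, hv]
    rw [hxv] at h
    have : ((k:ℝ)+2) * (d v : ℝ) = ((k:ℝ)+2) * 2 := by linarith
    have hne2 : ((k:ℝ)+2) ≠ 0 := by positivity
    have : (d v : ℝ) = 2 := mul_left_cancel₀ hne2 this
    exact_mod_cast this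
  -- some vertex outside C
  have hcomplne : ∃ v : V, v ∉ C := by
    have hpos : 0 < (Cᶜ : Finset V).card := by
      rw [Finset.card_compl, hCcard]; omega
    obtain ⟨v, hv⟩ := Finset.card_pos.mp hpos
    exact ⟨v, by simpa using hv⟩
  -- part 1 : -2 is an eigenvalue
  have part1 : G.IsAdjEigenvalue (-2) := by
    obtain ⟨v0, hv0⟩ := hcomplne
    have hxne : x ≠ 0 := by
      intro h
      have := congrFun h v0
      simp [hx, hv0] at this
    refine ⟨x, hxne, ?_⟩
    have hAx : G.adjMatrix ℝ *ᵥ x = (-2 : ℝ) • x := by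
      have h := hBx
      rw [Matrix.add_mulVec, Matrix.smul_mulVec, Matrix.one_mulVec] at h
      have := eq_neg_of_add_eq_zero_left h
      rw [this, neg_smul]
    rw [adjMatrix_congr G (fun a b => Classical.propDecidable (G.Adj a b)) ‹DecidableRel G.Adj›]
    exact hAx
  -- part 4 : cardinality
  have part4 : Fintype.card {v : V // v ∉ C} = Fintype.card V - 3 := by
    have : Fintype.card {v : V // v ∉ C} = (Finset.univ.filter (· ∉ C)).card := by
      rw [Fintype.card_subtype]
    rw [this, hcompl]
  -- part 3 : regularity of induced subgraph
  have part3 : (G.comap (Subtype.val : {v : V // v ∉ C} → V)).IsRegularOfDegree (k - 2) := by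
    intro v
    have hdegcard : (G.comap (Subtype.val : {v : V // v ∉ C} → V)).degree v
        = (Finset.univ.filter fun u : {x : V // x ∉ C} => G.Adj ↑v ↑u).card := by
      rw [SimpleGraph.degree]
      congr 1
      ext u
      simp [SimpleGraph.mem_neighborFinset]
    rw [hdegcard]
    have hcard1 : (Finset.univ.filter fun u : {x : V // x ∉ C} => G.Adj ↑v ↑u).card
        = Fintype.card {u : {x : V // x ∉ C} // G.Adj ↑v ↑u} := (Fintype.card_subtype _).symm
    have hcard2 : Fintype.card {u : {x : V // x ∉ C} // G.Adj ↑v ↑u}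
        = Fintype.card {u : V // u ∉ C ∧ G.Adj ↑v u} :=
      Fintype.card_congr (Equiv.subtypeSubtypeEquivSubtypeInter _ _)
    have hcard3 : Fintype.card {u : V // u ∉ C ∧ G.Adj ↑v u}
        = (Finset.univ.filter fun u : V => u ∉ C ∧ G.Adj ↑v u).card := Fintype.card_subtype _
    have hsd : (Finset.univ.filter fun u : V => u ∉ C ∧ G.Adj ↑v u)
        = G.neighborFinset ↑v \ C := by
      ext u
      simp [SimpleGraph.mem_neighborFinset, and_comm]
    have hinter : G.neighborFinset ↑v ∩ C = C.filter fun u => G.Adj ↑v u := by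
      ext u
      simp [SimpleGraph.mem_neighborFinset, and_comm]
    have hintercard : (G.neighborFinset ↑v ∩ C).card = 2 := by
      rw [hinter]
      exact part2 ↑v v.2
    have htot := Finset.card_sdiff_add_card_inter (G.neighborFinset ↑v) C
    rw [hintercard, show (G.neighborFinset (↑v : V)).card = k from hreg ↑v] at htot
    rw [hcard1, hcard2, hcard3, hsd]
    omega
  -- part 5 : eigenvalue bound for the induced subgraph
  have part5 : ∀ μ : ℝ, (G.comap (Subtype.val : {v : V // v ∉ C} → V)).IsAdjEigenvalue μ
      → -2 ≤ μ := by
    rintro μ ⟨w, hwne, hmul⟩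
    set y : V → ℝ := fun u => if h : u ∈ C then 0 else w ⟨u, h⟩ with hy
    have hyC : ∀ u ∈ C, y u = 0 := fun u hu => by simp [hy, hu]
    have hy_sub : ∀ u : {x : V // x ∉ C}, y ↑u = w u := fun u => by
      simp [hy, u.2]
    have hmul' : ∀ u : {x : V // x ∉ C},
        ∑ t : {x : V // x ∉ C}, (if G.Adj ↑u ↑t then (1:ℝ) else 0) * w t = μ * w u := by
      intro u
      have := congrFun hmul u
      simpa [Matrix.mulVec, dotProduct] using this
    have hS : 0 < ∑ u : {x : V // x ∉ C}, w u * w u := by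
      have hnn : 0 ≤ ∑ u : {x : V // x ∉ C}, w u * w u :=
        Finset.sum_nonneg fun u _ => mul_self_nonneg _
      rcases hnn.lt_or_eq with h | h
      · exact h
      · exfalso
        exact hwne (dotProduct_self_eq_zero.mp h.symm)
    have hyy : ∑ u : V, y u * y u = ∑ u : {x : V // x ∉ C}, w u * w u := by
      rw [sum_off_finset C _ (fun u hu => by rw [hyC u hu]; ring)]
      exact Finset.sum_congr rfl fun u _ => by rw [hy_sub u]
    have hAyy : ∑ u : V, y u * (G.adjMatrix ℝ *ᵥ y) u
        = μ * ∑ u : {x : V // x ∉ C}, w u * w u := by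
      rw [sum_off_finset C _ (fun u hu => by rw [hyC u hu]; ring)]
      rw [Finset.mul_sum]
      refine Finset.sum_congr rfl fun u _ => ?_
      have hmv : (G.adjMatrix ℝ *ᵥ y) ↑u = μ * w u := by
        have expand : (G.adjMatrix ℝ *ᵥ y) (↑u : V)
            = ∑ t : V, (if G.Adj ↑u t then (1:ℝ) else 0) * y t := by
          simp [Matrix.mulVec, dotProduct]
        rw [expand]
        rw [sum_off_finset C _ (fun t ht => by rw [hyC t ht]; ring)]
        rw [← hmul' u]
        exact Finset.sum_congr rfl fun t _ => by rw [hy_sub t]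
      rw [hmv, hy_sub u]
      ring
    have hpsd := (adjB_posSemidef G hgem2).dotProduct_mulVec_nonneg y
    have hstar : star y = y := by funext v; exact star_trivial _
    rw [hstar, Matrix.add_mulVec, Matrix.smul_mulVec, Matrix.one_mulVec,
      dotProduct_add] at hpsd
    have h1 : y ⬝ᵥ (G.adjMatrix ℝ *ᵥ y) = μ * ∑ u : {x : V // x ∉ C}, w u * w u := hAyy
    have h2 : y ⬝ᵥ ((2:ℝ) • y) = 2 * ∑ u : {x : V // x ∉ C}, w u * w u := by
      rw [dotProduct_smul, smul_eq_mul]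
      rw [show y ⬝ᵥ y = ∑ u : V, y u * y u from rfl, hyy]
    rw [h1, h2] at hpsd
    nlinarith [hS, hpsd]
  refine ⟨part1, part2, part3, part4, part5, by omega⟩
end

section
/- Let G be a k-regular graph on n vertices with all adjacency eigenvalues ≥ −2 and 2n = 3(k+2). If G is disconnected, then either n = 3 and k = 0 (G is the empty graph on 3 vertices), or n = 6 and k = 2 (G is the disjoint union of two triangles). -/
/-- Let `G` be a `k`-regular graph on `n` vertices with all adjacency eigenvalues `≥ −2`
and `2n = 3(k+2)`. If `G` is disconnected, then `n = 3` and `k = 0`, or `n = 6` and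
`k = 2`. -/
theorem disconnected_G3' {V : Type*} [Fintype V]
    (G : SimpleGraph V) [DecidableRel G.Adj]
    (k : ℕ) (hreg : G.IsRegularOfDegree k)
    (hgem2 : ∀ μ : ℝ, G.IsAdjEigenvalue μ → -2 ≤ μ)
    (hnk : 2 * Fintype.card V = 3 * (k + 2))
    (hdisc : ¬ G.Connected) :
    (Fintype.card V = 3 ∧ k = 0) ∨ (Fintype.card V = 6 ∧ k = 2) := by
  classical
  by_cases hne : Nonempty V
  · rw [SimpleGraph.connected_iff] at hdisc
    push_neg at hdisc
    have hpre := hdisc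
    have : ¬ G.Preconnected := fun h => (hdisc h).elim hne.some
    rw [SimpleGraph.Preconnected] at this
    push_neg at this
    obtain ⟨u, v, huv⟩ := this
    set Su : Finset V := insert u (G.neighborFinset u) with hSu
    set Sv : Finset V := insert v (G.neighborFinset v) with hSv
    have hreachu : ∀ w ∈ Su, G.Reachable u w := by
      intro w hw
      rcases Finset.mem_insert.mp hw with h | h
      · subst h; exact SimpleGraph.Reachable.refl _
      · exact ((SimpleGraph.mem_neighborFinset _ _ _).mp h).reachable
    have hreachv : ∀ w ∈ Sv, G.Reachable v w := by
      intro w hw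
      rcases Finset.mem_insert.mp hw with h | h
      · subst h; exact SimpleGraph.Reachable.refl _
      · exact ((SimpleGraph.mem_neighborFinset _ _ _).mp h).reachable
    have hdisj : Disjoint Su Sv := by
      rw [Finset.disjoint_left]
      intro w hw hw'
      exact huv ((hreachu w hw).trans (hreachv w hw').symm)
    have hcu : Su.card = k + 1 := by
      rw [hSu, Finset.card_insert_of_notMem (G.notMem_neighborFinset_self u),
        G.card_neighborFinset_eq_degree, hreg u]
    have hcv : Sv.card = k + 1 := by
      rw [hSv, Finset.card_insert_of_notMem (G.notMem_neighborFinset_self v),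
        G.card_neighborFinset_eq_degree, hreg v]
    have hle : (Su ∪ Sv).card ≤ Fintype.card V := Finset.card_le_univ _
    rw [Finset.card_union_of_disjoint hdisj, hcu, hcv] at hle
    omega
  · have : Fintype.card V = 0 := by
      simp [Fintype.card_eq_zero_iff.mpr (not_nonempty_iff.mp hne)]
    omega
end

section
/- Let G be a regular connected graph and C₁,…,C_m (m ≥ 2) pairwise disjoint cocliques in G, each of which is a Hoffman coclique (i.e. every vertex outside C_i has exactly ν = −λ_min(G) neighbors in C_i). Then the induced subgraph H of G on C₁ ∪ … ∪ C_m is (m−1)ν-regular, has chromatic number m, smallest eigenvalue −ν, and satisfies χ(H) = 1 − λ_max(H)/λ_min(H). -/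
open Matrix Finset in
theorem rayleigh_lower {n : Type*} [Fintype n] [DecidableEq n] (A : Matrix n n ℝ)
    (hA : A.IsHermitian) (b : ℝ)
    (hb : ∀ μ : ℝ, (∃ v : n → ℝ, v ≠ 0 ∧ A *ᵥ v = μ • v) → b ≤ μ) (x : n → ℝ) :
    b * (x ⬝ᵥ x) ≤ x ⬝ᵥ (A *ᵥ x) := by
  classical
  set B := hA.eigenvectorBasis with hB
  have key : ∀ i, b ≤ hA.eigenvalues i := fun i =>
    hb _ ⟨B i, fun h => B.orthonormal.ne_zero i (by simpa using congrArg (WithLp.toLp 2) h), hA.mulVec_eigenvectorBasis i⟩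
  have hdot : ∀ y z : EuclideanSpace ℝ n, (inner ℝ y z : ℝ) = (y : n → ℝ) ⬝ᵥ (z : n → ℝ) := by
    intro y z
    simp [PiLp.inner_apply, dotProduct, RCLike.inner_apply, mul_comm]
  have hAt : Aᵀ = A := by
    have h := hA; rwa [Matrix.IsHermitian, conjTranspose] at h
  set x' : EuclideanSpace ℝ n := WithLp.toLp 2 x with hx'
  set y' : EuclideanSpace ℝ n := WithLp.toLp 2 (A *ᵥ x) with hy'
  set c : n → ℝ := fun i => (inner ℝ (B i) x' : ℝ) with hc
  have hcomm : ∀ i, (inner ℝ x' (B i) : ℝ) = c i := fun i => (real_inner_comm x' (B i)).symm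
  have hterm : ∀ i, (inner ℝ (B i) y' : ℝ) = hA.eigenvalues i * c i := by
    intro i
    have h2 : A *ᵥ (B i : n → ℝ) = hA.eigenvalues i • (B i : n → ℝ) :=
      hA.mulVec_eigenvectorBasis i
    have h1 : ((B i : n → ℝ)) ⬝ᵥ (A *ᵥ x) = (A *ᵥ (B i : n → ℝ)) ⬝ᵥ (x : n → ℝ) := by
      rw [Matrix.dotProduct_mulVec, ← Matrix.mulVec_transpose, hAt]
    have h3 : (inner ℝ (B i) y' : ℝ) = ((B i : n → ℝ)) ⬝ᵥ (A *ᵥ x) := hdot (B i) y'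
    rw [h3, h1, h2, smul_dotProduct, smul_eq_mul]
    exact congrArg _ (hdot (B i) x').symm
  have hxy : x ⬝ᵥ (A *ᵥ x) = ∑ i, hA.eigenvalues i * (c i * c i) := by
    rw [← hdot x' y', ← B.sum_inner_mul_inner x' y']
    refine Finset.sum_congr rfl fun i _ => ?_
    rw [hterm i, hcomm i]; ring
  have hxx : x ⬝ᵥ x = ∑ i, c i * c i := by
    rw [← hdot x' x', ← B.sum_inner_mul_inner x' x']
    refine Finset.sum_congr rfl fun i _ => ?_
    rw [hcomm i]
  rw [hxy, hxx, Finset.mul_sum]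
  refine Finset.sum_le_sum fun i _ => ?_
  exact mul_le_mul_of_nonneg_right (key i) (mul_self_nonneg _)

open Matrix in
theorem eig_le_degree {W : Type*} [Fintype W] [DecidableEq W] (Γ : SimpleGraph W) [DecidableRel Γ.Adj]
    {d : ℕ} (hreg : Γ.IsRegularOfDegree d) {μ : ℝ}
    (h : ∃ z : W → ℝ, z ≠ 0 ∧ Γ.adjMatrix ℝ *ᵥ z = μ • z) : μ ≤ d := by
  obtain ⟨z, hz0, hz⟩ := h
  obtain ⟨w1, hw1⟩ := Function.ne_iff.1 hz0
  obtain ⟨w₀, -, hw₀⟩ := Finset.exists_max_image Finset.univ (fun w => |z w|) ⟨w1, Finset.mem_univ _⟩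
  have hw1' : z w1 ≠ 0 := hw1
  have hpos : 0 < |z w₀| := lt_of_lt_of_le (abs_pos.2 hw1') (hw₀ w1 (Finset.mem_univ _))
  have h1 : μ * z w₀ = ∑ u ∈ Γ.neighborFinset w₀, z u := by
    rw [← SimpleGraph.adjMatrix_mulVec_apply, hz]; simp
  have h2 : |μ| * |z w₀| ≤ d * |z w₀| := by
    rw [← abs_mul, h1]
    calc |∑ u ∈ Γ.neighborFinset w₀, z u| ≤ ∑ u ∈ Γ.neighborFinset w₀, |z u| :=
          Finset.abs_sum_le_sum_abs _ _
    _ ≤ ∑ u ∈ Γ.neighborFinset w₀, |z w₀| :=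
          Finset.sum_le_sum fun u _ => hw₀ u (Finset.mem_univ _)
    _ = d * |z w₀| := by
          rw [Finset.sum_const, SimpleGraph.card_neighborFinset_eq_degree, hreg w₀,
            nsmul_eq_mul]
  exact le_trans (le_abs_self μ) (le_of_mul_le_mul_right h2 hpos)

open Matrix Finset in
theorem hoffH_nbr_sum {V : Type*} [Fintype V] [DecidableEq V] (G : SimpleGraph V)
    [DecidableRel G.Adj] {m : ℕ} (C : Fin m → Finset V)
    (hdisj : ∀ i j, i ≠ j → Disjoint (C i) (C j))
    {M : Type*} [AddCommMonoid M] (g : V → M) (w : {v : V // ∃ i, v ∈ C i}) :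
    ∑ u ∈ ((G.comap (Subtype.val : {v : V // ∃ i, v ∈ C i} → V)).neighborFinset w), g u.val
      = ∑ j : Fin m, ∑ u ∈ (C j).filter (fun u => G.Adj w.val u), g u := by
  classical
  have hpd : (↑(Finset.univ : Finset (Fin m)) : Set (Fin m)).PairwiseDisjoint
      (fun j => (C j).filter (fun u => G.Adj w.val u)) := by
    intro i _ j _ hij
    exact (hdisj i j hij).mono (Finset.filter_subset _ _) (Finset.filter_subset _ _)
  rw [← Finset.sum_biUnion hpd]
  refine Finset.sum_bij (fun u _ => u.val) ?_ ?_ ?_ ?_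
  · intro u hu
    obtain ⟨j, hj⟩ := u.2
    refine Finset.mem_biUnion.2 ⟨j, Finset.mem_univ _, Finset.mem_filter.2 ⟨hj, ?_⟩⟩
    exact ((SimpleGraph.comap (Subtype.val : {v : V // ∃ i, v ∈ C i} → V) G).mem_neighborFinset w u).1 hu
  · intro a _ b _ hab
    exact Subtype.ext hab
  · intro b hb
    obtain ⟨j, -, hbj⟩ := Finset.mem_biUnion.1 hb
    obtain ⟨hbC, hadj⟩ := Finset.mem_filter.1 hbj
    exact ⟨⟨b, ⟨j, hbC⟩⟩,
      ((SimpleGraph.comap (Subtype.val : {v : V // ∃ i, v ∈ C i} → V) G).mem_neighborFinset w ⟨b, ⟨j, hbC⟩⟩).2 hadj, rfl⟩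
  · intro a _
    rfl

open Finset in
theorem sum_restrict {V : Type*} [Fintype V] [DecidableEq V] (p : V → Prop) [DecidablePred p]
    (s : Finset V) (f : V → ℝ) (hf : ∀ v ∈ s, ¬ p v → f v = 0) :
    ∑ v ∈ s, f v = ∑ w : {v // p v}, if (w : V) ∈ s then f w else 0 := by
  classical
  rw [← Finset.sum_subtype (Finset.univ.filter p) (by simp) (fun v => if v ∈ s then f v else 0)]
  rw [← Finset.sum_filter]
  rw [show (Finset.univ.filter p).filter (· ∈ s) = s.filter p by
    ext v; simp [and_comm]]
  exact (Finset.sum_filter_of_ne fun v hv hfv => by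
    by_contra hp; exact hfv (hf v hv hp)).symm

set_option maxHeartbeats 1000000 in
open Matrix in
open Classical in
/-- Let `G` be a connected regular graph with smallest adjacency eigenvalue `−ν`, and let
`C₁, …, C_m` (`m ≥ 2`) be pairwise disjoint Hoffman cocliques (every vertex outside `C_i`
has exactly `ν` neighbors in `C_i`). Then the induced subgraph `H` on `C₁ ∪ … ∪ C_m` is
`(m−1)ν`-regular, has chromatic number `m`, smallest eigenvalue `−ν`, and is Hoffman
colorable: `χ(H) = 1 − λ_max(H)/λ_min(H)`. -/
theorem union_of_hoffman_cocliques {V : Type*} [Fintype V] [DecidableEq V]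
    (G : SimpleGraph V) [DecidableRel G.Adj] (hconn : G.Connected)
    (k : ℕ) (hreg : G.IsRegularOfDegree k)
    (ν : ℕ) (hν : 0 < ν)
    (hmin : G.IsAdjEigenvalue (-(ν : ℝ)) ∧ ∀ μ, G.IsAdjEigenvalue μ → -(ν : ℝ) ≤ μ)
    (m : ℕ) (hm : 2 ≤ m) (C : Fin m → Finset V)
    (hdisj : ∀ i j, i ≠ j → Disjoint (C i) (C j))
    (hcoc : ∀ i, ((C i : Set V)).Pairwise fun u v => ¬ G.Adj u v)
    (hhoff : ∀ i, ∀ v ∉ C i, ((C i).filter fun u => G.Adj v u).card = ν)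
    (lmaxH lminH : ℝ)
    (hmaxH : (G.comap (Subtype.val : {v : V // ∃ i, v ∈ C i} → V)).IsAdjEigenvalue lmaxH ∧
      ∀ μ, (G.comap (Subtype.val : {v : V // ∃ i, v ∈ C i} → V)).IsAdjEigenvalue μ → μ ≤ lmaxH)
    (hminH : (G.comap (Subtype.val : {v : V // ∃ i, v ∈ C i} → V)).IsAdjEigenvalue lminH ∧
      ∀ μ, (G.comap (Subtype.val : {v : V // ∃ i, v ∈ C i} → V)).IsAdjEigenvalue μ → lminH ≤ μ) :
    (G.comap (Subtype.val : {v : V // ∃ i, v ∈ C i} → V)).IsRegularOfDegree ((m - 1) * ν) ∧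
    (G.comap (Subtype.val : {v : V // ∃ i, v ∈ C i} → V)).chromaticNumber = m ∧
    lminH = -(ν : ℝ) ∧
    (m : ℝ) = 1 - lmaxH / lminH := by
  classical
  obtain ⟨v₀⟩ := hconn.nonempty
  -- basic facts
  have Cne : ∀ i, (C i).Nonempty := by
    intro i
    rcases Finset.eq_empty_or_nonempty (C i) with h | h
    · exfalso
      have h2 := hhoff i v₀ (by simp [h])
      rw [h] at h2; simp at h2; omega
    · exact h
  have huniq : ∀ {v : V} {i j : Fin m}, v ∈ C i → v ∈ C j → i = j := by
    intro v i j hi hj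
    by_contra hne
    exact (hdisj i j hne).forall_ne_finset hi hj rfl
  have hfilt : ∀ (i j : Fin m) (v : V), v ∈ C i →
      ((C j).filter fun u => G.Adj v u).card = if j = i then 0 else ν := by
    intro i j v hv
    by_cases h : j = i
    · subst h
      rw [if_pos rfl, Finset.card_eq_zero, Finset.filter_eq_empty_iff]
      intro u hu hadj
      exact hcoc j hv hu (G.ne_of_adj hadj) hadj
    · rw [if_neg h]
      exact hhoff j v (fun hvj => h (huniq hvj hv))
  have i₀ : Fin m := ⟨0, by omega⟩
  have hsum_ite : ∀ (i : Fin m), ∑ j : Fin m, (if j = i then 0 else ν) = (m - 1) * ν := by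
    intro i
    rw [← Finset.add_sum_erase _ _ (Finset.mem_univ i), if_pos rfl, zero_add]
    rw [Finset.sum_congr rfl (fun j hj => if_neg (Finset.mem_erase.1 hj).1)]
    rw [Finset.sum_const, smul_eq_mul, Finset.card_erase_of_mem (Finset.mem_univ i),
      Finset.card_univ, Fintype.card_fin]
  have hregH : (G.comap (Subtype.val : {v : V // ∃ i, v ∈ C i} → V)).IsRegularOfDegree
      ((m - 1) * ν) := by
    intro w
    obtain ⟨i, hwi⟩ := w.2
    have hs := hoffH_nbr_sum G C hdisj (fun _ => (1 : ℕ)) w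
    have hcards : ((G.comap (Subtype.val : {v : V // ∃ i, v ∈ C i} → V)).neighborFinset w).card
        = ∑ j : Fin m, ((C j).filter (fun u => G.Adj w.val u)).card := by
      simp only [Finset.sum_const, smul_eq_mul, mul_one] at hs
      exact hs
    rw [← SimpleGraph.card_neighborFinset_eq_degree, hcards,
      Finset.sum_congr rfl (fun j _ => hfilt i j w.val hwi), hsum_ite i]
  obtain ⟨w₀v, hw₀v⟩ := Cne i₀
  have hm1 : ((m - 1 : ℕ) : ℝ) = (m : ℝ) - 1 := by
    rw [Nat.cast_sub (by omega)]; norm_num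
  have hm2 : ((m - 1 - 1 : ℕ) : ℝ) = (m : ℝ) - 2 := by
    rw [show m - 1 - 1 = m - 2 from by omega, Nat.cast_sub (by omega)]; norm_num
  have hgsum : ∀ (inst : DecidableRel (G.comap (Subtype.val : {v : V // ∃ i, v ∈ C i} → V)).Adj)
      (w : {v : V // ∃ i, v ∈ C i}) (g : V → ℝ),
      (@SimpleGraph.adjMatrix ℝ _ (G.comap (Subtype.val : {v : V // ∃ i, v ∈ C i} → V)) inst _ _
          *ᵥ (fun u => g u.val)) w
        = ∑ j : Fin m, ∑ u ∈ (C j).filter (fun u => G.Adj w.val u), g u := by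
    intro inst w g
    rw [Subsingleton.elim inst (fun a b => SimpleGraph.instDecidableComapAdj Subtype.val G a b)]
    rw [SimpleGraph.adjMatrix_mulVec_apply]
    exact hoffH_nbr_sum G C hdisj g w
  have heigy : (G.comap (Subtype.val : {v : V // ∃ i, v ∈ C i} → V)).IsAdjEigenvalue (-(ν:ℝ)) := by
    refine ⟨(fun u => (if u.val ∈ C i₀ then ((m:ℝ)-1) else -1)), ?_, ?_⟩
    · intro h0
      have h1 := congrFun h0 ⟨w₀v, ⟨i₀, hw₀v⟩⟩
      simp only [hw₀v, if_true, Pi.zero_apply] at h1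
      have h2 : (m : ℝ) = 1 := by linarith
      have h3 : m = 1 := by exact_mod_cast h2
      omega
    · funext w
      obtain ⟨i, hwi⟩ := w.2
      refine Eq.trans (hgsum _ w (fun v => if v ∈ C i₀ then ((m:ℝ)-1) else -1)) ?_
      have hconst : ∀ j : Fin m, ∑ u ∈ (C j).filter (fun u => G.Adj w.val u),
          (if u ∈ C i₀ then ((m:ℝ)-1) else -1)
          = (if j = i₀ then ((m:ℝ)-1) else -1) * (if j = i then 0 else (ν:ℝ)) := by
        intro j
        have hval : ∀ u ∈ (C j).filter (fun u => G.Adj w.val u),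
            (if u ∈ C i₀ then ((m:ℝ)-1) else -1) = (if j = i₀ then ((m:ℝ)-1) else -1) := by
          intro u hu
          have huj : u ∈ C j := (Finset.mem_filter.1 hu).1
          by_cases hji : j = i₀
          · subst hji; rw [if_pos huj, if_pos rfl]
          · rw [if_neg (fun hui => hji (huniq huj hui)), if_neg hji]
        rw [Finset.sum_congr rfl hval, Finset.sum_const, hfilt i j w.val hwi]
        by_cases hji2 : j = i <;> simp [hji2, nsmul_eq_mul, mul_comm]
      refine Eq.trans (Finset.sum_congr rfl fun j _ => hconst j) ?_
      have hrhs : ((-(ν:ℝ)) • (fun u : {v : V // ∃ i, v ∈ C i} =>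
          (if u.val ∈ C i₀ then ((m:ℝ)-1) else -1))) w
          = -(ν:ℝ) * (if w.val ∈ C i₀ then ((m:ℝ)-1) else -1) := rfl
      rw [hrhs]
      by_cases hii : i = i₀
      · subst hii
        rw [if_pos hwi]
        have hpt : ∀ j : Fin m, (if j = i then ((m:ℝ)-1) else -1) * (if j = i then 0 else (ν:ℝ))
            = (if j = i then (ν:ℝ) else 0) + (-(ν:ℝ)) := by
          intro j
          by_cases hji : j = i
          · subst hji; rw [if_pos rfl, if_pos rfl, if_pos rfl]; ring
          · rw [if_neg hji, if_neg hji, if_neg hji]; ring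
        rw [Finset.sum_congr rfl fun j _ => hpt j]
        simp only [Finset.sum_add_distrib, Finset.sum_ite_eq', Finset.mem_univ, if_true,
          Finset.sum_const, Finset.card_univ, Fintype.card_fin, nsmul_eq_mul, smul_eq_mul]
        ring
      · rw [if_neg (fun hwc => hii (huniq hwi hwc))]
        have hpt : ∀ j : Fin m, (if j = i₀ then ((m:ℝ)-1) else -1) * (if j = i then 0 else (ν:ℝ))
            = ((if j = i₀ then (m:ℝ)*ν else 0) + (if j = i then (ν:ℝ) else 0) + (-(ν:ℝ))) := by
          intro j
          by_cases h1 : j = i₀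
          · subst h1
            rw [if_pos rfl, if_pos rfl, if_neg (fun h => hii h.symm),
              if_neg (fun h => hii h.symm)]
            ring
          · by_cases h2 : j = i
            · subst h2; rw [if_neg h1, if_neg h1, if_pos rfl, if_pos rfl]; ring
            · rw [if_neg h1, if_neg h1, if_neg h2, if_neg h2]; ring
        rw [Finset.sum_congr rfl fun j _ => hpt j]
        simp only [Finset.sum_add_distrib, Finset.sum_ite_eq', Finset.mem_univ, if_true,
          Finset.sum_const, Finset.card_univ, Fintype.card_fin, nsmul_eq_mul, smul_eq_mul]
        ring
  have hlm_le : lminH ≤ -(ν:ℝ) := hminH.2 _ heigy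
  have hermG : (G.adjMatrix ℝ).IsHermitian := by
    rw [Matrix.IsHermitian]
    ext i j
    simp [Matrix.conjTranspose_apply, SimpleGraph.adjMatrix_apply, SimpleGraph.adj_comm]
  have hADJG : (G.adjMatrix ℝ) = @SimpleGraph.adjMatrix ℝ _ G
      (fun a b => Classical.propDecidable (G.Adj a b)) _ _ := by congr!
  have hbG : ∀ μ : ℝ, (∃ v : V → ℝ, v ≠ 0 ∧ G.adjMatrix ℝ *ᵥ v = μ • v) → -(ν:ℝ) ≤ μ := by
    intro μ h
    rw [hADJG] at h
    exact hmin.2 μ h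
  have hlm_ge : -(ν:ℝ) ≤ lminH := by
    obtain ⟨x, hx0, hx⟩ := hminH.1
    have hx2 : ∀ w : {v : V // ∃ i, v ∈ C i},
        (∑ u ∈ (G.comap (Subtype.val : {v : V // ∃ i, v ∈ C i} → V)).neighborFinset w, x u)
          = lminH * x w := by
      intro w'
      have h5 := congrFun hx w'
      rw [SimpleGraph.adjMatrix_mulVec_apply, Pi.smul_apply, smul_eq_mul] at h5
      convert h5 using 2
      congr!
    set xt : V → ℝ := fun v => if h : ∃ i, v ∈ C i then x ⟨v, h⟩ else 0 with hxt
    have hxt_zero : ∀ v, ¬ (∃ i, v ∈ C i) → xt v = 0 := fun v hv => dif_neg hv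
    have hxt_val : ∀ w : {v : V // ∃ i, v ∈ C i}, xt w.val = x w := by
      intro w
      simp only [hxt, dif_pos w.2]
    have hxx_pos : 0 < x ⬝ᵥ x := by
      obtain ⟨w1, hw1⟩ := Function.ne_iff.1 hx0
      refine Finset.sum_pos' (fun u _ => mul_self_nonneg _) ⟨w1, Finset.mem_univ _, ?_⟩
      exact mul_self_pos.2 hw1
    have ha : xt ⬝ᵥ xt = x ⬝ᵥ x := by
      simp only [dotProduct]
      rw [sum_restrict (fun v => ∃ i, v ∈ C i) Finset.univ _
        (fun v _ hv => by rw [hxt_zero v hv, mul_zero])]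
      refine Finset.sum_congr rfl fun w _ => ?_
      rw [if_pos (Finset.mem_univ _), hxt_val]
    have hinner : ∀ w : {v : V // ∃ i, v ∈ C i},
        (G.adjMatrix ℝ *ᵥ xt) w.val = lminH * x w := by
      intro w
      rw [SimpleGraph.adjMatrix_mulVec_apply]
      rw [sum_restrict (fun v => ∃ i, v ∈ C i) (G.neighborFinset w.val) _
        (fun v _ hv => hxt_zero v hv)]
      have hite : ∀ u : {v : V // ∃ i, v ∈ C i},
          (if u.val ∈ G.neighborFinset w.val then xt u.val else 0)
          = if (G.comap (Subtype.val : {v : V // ∃ i, v ∈ C i} → V)).Adj w u then x u else 0 := by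
        intro u
        by_cases hadj : (G.comap (Subtype.val : {v : V // ∃ i, v ∈ C i} → V)).Adj w u
        · rw [if_pos ((G.mem_neighborFinset _ _).2 hadj), if_pos hadj, hxt_val]
        · rw [if_neg (fun hmem => hadj ((G.mem_neighborFinset _ _).1 hmem)), if_neg hadj]
      rw [Finset.sum_congr rfl fun u _ => hite u]
      rw [← Finset.sum_filter, ← SimpleGraph.neighborFinset_eq_filter]
      exact hx2 w
    have hb2 : xt ⬝ᵥ (G.adjMatrix ℝ *ᵥ xt) = lminH * (x ⬝ᵥ x) := by
      simp only [dotProduct]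
      rw [sum_restrict (fun v => ∃ i, v ∈ C i) Finset.univ _
        (fun v _ hv => by rw [hxt_zero v hv, zero_mul])]
      refine Eq.trans (Finset.sum_congr rfl (fun w _ => ?_) :
          _ = ∑ w : {v : V // ∃ i, v ∈ C i}, x w * (lminH * x w)) ?_
      · rw [if_pos (Finset.mem_univ _), hxt_val, hinner w]
      · rw [Finset.mul_sum]
        exact Finset.sum_congr rfl fun w _ => by ring
    have hray := rayleigh_lower (G.adjMatrix ℝ) hermG (-(ν:ℝ)) hbG xt
    rw [hb2, ha] at hray
    nlinarith [hxx_pos, hray]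
  have hlmin : lminH = -(ν:ℝ) := le_antisymm hlm_le hlm_ge
  have hADJH : ∀ (d1 d2 : DecidableRel (G.comap (Subtype.val : {v : V // ∃ i, v ∈ C i} → V)).Adj),
      @SimpleGraph.adjMatrix ℝ _ _ d1 _ _ = @SimpleGraph.adjMatrix ℝ _ _ d2 _ _ := by
    intro d1 d2; congr!
  have hermH : ((G.comap (Subtype.val : {v : V // ∃ i, v ∈ C i} → V)).adjMatrix ℝ).IsHermitian := by
    rw [Matrix.IsHermitian]
    ext i j
    simp [Matrix.conjTranspose_apply, SimpleGraph.adjMatrix_apply, SimpleGraph.adj_comm]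
  have hbH : ∀ μ : ℝ, (∃ v : {v : V // ∃ i, v ∈ C i} → ℝ, v ≠ 0 ∧
      (G.comap (Subtype.val : {v : V // ∃ i, v ∈ C i} → V)).adjMatrix ℝ *ᵥ v = μ • v) →
      -(ν:ℝ) ≤ μ := by
    intro μ h
    rw [hADJH _ (fun a b => Classical.propDecidable _)] at h
    exact hlmin ▸ hminH.2 μ h
  have hnW_pos : 0 < Fintype.card {v : V // ∃ i, v ∈ C i} :=
    Fintype.card_pos_iff.2 ⟨⟨w₀v, ⟨i₀, hw₀v⟩⟩⟩
  -- the ratio bound for cocliques of H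
  have hcoclique : ∀ S : Finset {v : V // ∃ i, v ∈ C i},
      (∀ u ∈ S, ∀ v ∈ S, ¬ (G.comap (Subtype.val : {v : V // ∃ i, v ∈ C i} → V)).Adj u v) →
      S.card * m ≤ Fintype.card {v : V // ∃ i, v ∈ C i} := by
    intro S hS
    set nW := Fintype.card {v : V // ∃ i, v ∈ C i} with hnW
    set sc := S.card with hsc
    set K : ℝ := (((m-1)*ν : ℕ) : ℝ) with hK
    set oneS : {v : V // ∃ i, v ∈ C i} → ℝ := fun w => if w ∈ S then 1 else 0 with honeS
    set z : {v : V // ∃ i, v ∈ C i} → ℝ := fun w => nW * oneS w - sc with hzdef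
    set T : {v : V // ∃ i, v ∈ C i} → ℝ := fun w =>
      ∑ u ∈ (G.comap (Subtype.val : {v : V // ∃ i, v ∈ C i} → V)).neighborFinset w, oneS u
      with hTdef
    have hdegc : ∀ w : {v : V // ∃ i, v ∈ C i},
        ((((G.comap (Subtype.val : {v : V // ∃ i, v ∈ C i} → V)).neighborFinset w).card : ℕ) : ℝ)
          = K := fun w => by
      rw [SimpleGraph.card_neighborFinset_eq_degree, hregH w, hK]
    have hT0 : ∀ w ∈ S, T w = 0 := by
      intro w hw
      refine Finset.sum_eq_zero fun u hu => ?_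
      exact if_neg (fun huS => hS w hw u huS
        (((G.comap (Subtype.val : {v : V // ∃ i, v ∈ C i} → V)).mem_neighborFinset _ _).1 hu))
    have hsum_oneS : ∑ w, oneS w = (sc:ℝ) := by
      simp [honeS, hsc, Finset.sum_ite_mem]
    have hST : ∑ w, oneS w * T w = 0 := by
      refine Finset.sum_eq_zero fun w _ => ?_
      by_cases hw : w ∈ S
      · rw [hT0 w hw, mul_zero]
      · rw [show oneS w = 0 from if_neg hw, zero_mul]
    have hTsum : ∑ w, T w = K * (sc:ℝ) := by
      have hcomm : ∀ u : {v : V // ∃ i, v ∈ C i},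
          (∑ w, if (G.comap (Subtype.val : {v : V // ∃ i, v ∈ C i} → V)).Adj w u
            then oneS u else 0) = oneS u * K := by
        intro u
        have hsw : ∀ w : {v : V // ∃ i, v ∈ C i},
            (if (G.comap (Subtype.val : {v : V // ∃ i, v ∈ C i} → V)).Adj w u then oneS u else 0)
            = (if (G.comap (Subtype.val : {v : V // ∃ i, v ∈ C i} → V)).Adj u w then oneS u
              else 0) := by
          intro w
          by_cases h : (G.comap (Subtype.val : {v : V // ∃ i, v ∈ C i} → V)).Adj w u
          · rw [if_pos h, if_pos h.symm]
          · rw [if_neg h, if_neg (fun h' => h h'.symm)]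
        rw [Finset.sum_congr rfl (fun w _ => hsw w), ← Finset.sum_filter,
          ← SimpleGraph.neighborFinset_eq_filter, Finset.sum_const, nsmul_eq_mul, mul_comm,
          hdegc u]
      calc ∑ w, T w = ∑ w, ∑ u,
            (if (G.comap (Subtype.val : {v : V // ∃ i, v ∈ C i} → V)).Adj w u
              then oneS u else 0) := by
            refine Finset.sum_congr rfl fun w _ => ?_
            show (∑ u ∈ (G.comap (Subtype.val : {v : V // ∃ i, v ∈ C i} → V)).neighborFinset w,
              oneS u) = _
            rw [SimpleGraph.neighborFinset_eq_filter, Finset.sum_filter]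
      _ = ∑ u, ∑ w, (if (G.comap (Subtype.val : {v : V // ∃ i, v ∈ C i} → V)).Adj w u
              then oneS u else 0) := Finset.sum_comm
      _ = ∑ u, oneS u * K := Finset.sum_congr rfl fun u _ => hcomm u
      _ = K * (sc:ℝ) := by rw [← Finset.sum_mul, hsum_oneS, mul_comm]
    have hAz : ∀ w : {v : V // ∃ i, v ∈ C i},
        ((G.comap (Subtype.val : {v : V // ∃ i, v ∈ C i} → V)).adjMatrix ℝ *ᵥ z) w
          = (nW:ℝ) * T w - K * sc := by
      intro w
      rw [SimpleGraph.adjMatrix_mulVec_apply]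
      have : ∀ u ∈ (G.comap (Subtype.val : {v : V // ∃ i, v ∈ C i} → V)).neighborFinset w,
          z u = (nW:ℝ) * oneS u - sc := fun u _ => rfl
      rw [Finset.sum_congr rfl this, Finset.sum_sub_distrib, ← Finset.mul_sum,
        Finset.sum_const, nsmul_eq_mul, hdegc w]
    have hquad : z ⬝ᵥ ((G.comap (Subtype.val : {v : V // ∃ i, v ∈ C i} → V)).adjMatrix ℝ *ᵥ z)
        = -(nW:ℝ) * K * sc^2 := by
      simp only [dotProduct]
      have hterm : ∀ w : {v : V // ∃ i, v ∈ C i},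
          z w * (((G.comap (Subtype.val : {v : V // ∃ i, v ∈ C i} → V)).adjMatrix ℝ *ᵥ z) w)
          = (nW:ℝ)*(nW:ℝ)*(oneS w * T w) - ((nW:ℝ)*K*(sc:ℝ))*oneS w - ((sc:ℝ)*(nW:ℝ))*T w
            + (sc:ℝ)*(K*(sc:ℝ)) := by
        intro w
        rw [hAz w, show z w = (nW:ℝ) * oneS w - sc from rfl]
        ring
      rw [Finset.sum_congr rfl fun w _ => hterm w]
      rw [Finset.sum_add_distrib, Finset.sum_sub_distrib, Finset.sum_sub_distrib,
        ← Finset.mul_sum, ← Finset.mul_sum, ← Finset.mul_sum, hST, hsum_oneS, hTsum,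
        Finset.sum_const, Finset.card_univ, ← hnW, nsmul_eq_mul]
      ring
    have hnorm : z ⬝ᵥ z = (nW:ℝ)^2 * sc - (nW:ℝ) * sc^2 := by
      simp only [dotProduct]
      have hterm : ∀ w : {v : V // ∃ i, v ∈ C i},
          z w * z w = (nW:ℝ)*(nW:ℝ)*(oneS w * oneS w) - (2*(nW:ℝ)*(sc:ℝ))*oneS w
            + (sc:ℝ)*(sc:ℝ) := by
        intro w
        rw [show z w = (nW:ℝ) * oneS w - sc from rfl]
        ring
      have hsq : ∀ w : {v : V // ∃ i, v ∈ C i}, oneS w * oneS w = oneS w := by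
        intro w
        by_cases hw : w ∈ S <;> simp [honeS, hw]
      rw [Finset.sum_congr rfl fun w _ => hterm w]
      rw [Finset.sum_add_distrib, Finset.sum_sub_distrib, ← Finset.mul_sum, ← Finset.mul_sum,
        Finset.sum_congr rfl fun w _ => hsq w, hsum_oneS, Finset.sum_const, Finset.card_univ,
        ← hnW, nsmul_eq_mul]
      ring
    have hray := rayleigh_lower _ hermH (-(ν:ℝ)) hbH z
    rw [hquad, hnorm] at hray
    have hKval : K = ((m:ℝ)-1) * (ν:ℝ) := by
      rw [hK]; push_cast [hm1]; ring
    rcases Nat.eq_zero_or_pos sc with hsc0 | hsc_pos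
    · rw [hsc0, zero_mul]
      exact Nat.zero_le _
    · have hνr : (0:ℝ) < (ν:ℝ) := by exact_mod_cast hν
      have hnWr : (0:ℝ) < (nW:ℝ) := by exact_mod_cast hnW_pos
      have hscr : (0:ℝ) < (sc:ℝ) := by exact_mod_cast hsc_pos
      have hreal : (sc:ℝ) * m ≤ (nW:ℝ) := by
        rw [hKval] at hray
        nlinarith [hray, mul_pos (mul_pos hνr hnWr) hscr, sq_nonneg ((sc:ℝ))]
      exact_mod_cast hreal
  -- chromatic number
  have hcolm : (G.comap (Subtype.val : {v : V // ∃ i, v ∈ C i} → V)).Colorable m := by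
    refine ⟨SimpleGraph.Coloring.mk (fun w => w.2.choose) ?_⟩
    intro a b hadj heq
    have heq' : a.2.choose = b.2.choose := heq
    have ha' : a.val ∈ C (a.2.choose) := a.2.choose_spec
    have hb' : b.val ∈ C (b.2.choose) := b.2.choose_spec
    rw [heq'] at ha'
    have hne : a.val ≠ b.val := G.ne_of_adj hadj
    exact hcoc _ (Finset.mem_coe.2 ha') (Finset.mem_coe.2 hb') hne hadj
  have hchrom_ge : (m:ℕ∞) ≤ (G.comap (Subtype.val : {v : V // ∃ i, v ∈ C i} → V)).chromaticNumber := by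
    rw [SimpleGraph.le_chromaticNumber_iff_forall_surjective]
    intro Co c0
    by_contra hno
    push_neg at hno
    set F : Fin m → Finset {v : V // ∃ i, v ∈ C i} :=
      fun c => Finset.univ.filter (fun w => Co w = c) with hF
    have hpart : ∑ c : Fin m, (F c).card = Fintype.card {v : V // ∃ i, v ∈ C i} := by
      rw [← Finset.card_univ]
      exact (Finset.card_eq_sum_card_fiberwise (fun w _ => Finset.mem_univ (Co w))).symm
    have hFc : ∀ c, (F c).card * m ≤ Fintype.card {v : V // ∃ i, v ∈ C i} := by
      intro c
      refine hcoclique (F c) ?_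
      intro u hu v hv hadj
      exact Co.valid hadj ((Finset.mem_filter.1 hu).2.trans (Finset.mem_filter.1 hv).2.symm)
    have hF0 : (F c0).card = 0 := by
      rw [Finset.card_eq_zero, Finset.eq_empty_iff_forall_notMem]
      intro w hw
      exact hno w (Finset.mem_filter.1 hw).2
    have hle : m * Fintype.card {v : V // ∃ i, v ∈ C i}
        ≤ (m - 1) * Fintype.card {v : V // ∃ i, v ∈ C i} := by
      calc m * Fintype.card {v : V // ∃ i, v ∈ C i} = ∑ c : Fin m, (F c).card * m := by
            rw [← Finset.sum_mul, hpart, mul_comm]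
      _ = ∑ c ∈ Finset.univ.erase c0, (F c).card * m := by
            rw [← Finset.add_sum_erase _ _ (Finset.mem_univ c0), hF0, zero_mul, zero_add]
      _ ≤ ∑ _c ∈ Finset.univ.erase c0, Fintype.card {v : V // ∃ i, v ∈ C i} :=
            Finset.sum_le_sum (fun c _ => hFc c)
      _ = (m - 1) * Fintype.card {v : V // ∃ i, v ∈ C i} := by
            rw [Finset.sum_const, Finset.card_erase_of_mem (Finset.mem_univ c0),
              Finset.card_univ, Fintype.card_fin, smul_eq_mul]
    rw [mul_comm m _, mul_comm (m-1) _] at hle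
    have := Nat.le_of_mul_le_mul_left hle hnW_pos
    omega
  have hchrom : (G.comap (Subtype.val : {v : V // ∃ i, v ∈ C i} → V)).chromaticNumber = m :=
    le_antisymm hcolm.chromaticNumber_le hchrom_ge
  -- the largest eigenvalue
  have heig1 : (G.comap (Subtype.val : {v : V // ∃ i, v ∈ C i} → V)).IsAdjEigenvalue
      ((((m-1)*ν : ℕ)) : ℝ) := by
    refine ⟨Function.const _ 1, ?_, ?_⟩
    · intro h0
      have h1 := congrFun h0 ⟨w₀v, ⟨i₀, hw₀v⟩⟩
      simp [Function.const] at h1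
    · funext w
      obtain ⟨i, hwi⟩ := w.2
      refine Eq.trans (hgsum _ w (fun _ => (1:ℝ))) ?_
      have hone : ∀ j : Fin m, ∑ _u ∈ (C j).filter (fun u => G.Adj w.val u), (1:ℝ)
          = (((if j = i then 0 else ν) : ℕ) : ℝ) := by
        intro j
        rw [Finset.sum_const, nsmul_eq_mul, mul_one, hfilt i j w.val hwi]
      rw [Finset.sum_congr rfl fun j _ => hone j, ← Nat.cast_sum, hsum_ite i]
      simp [Function.const]
  have hlmax : lmaxH = (((m-1)*ν : ℕ) : ℝ) := by
    refine le_antisymm ?_ (hmaxH.2 _ heig1)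
    refine eig_le_degree (G.comap (Subtype.val : {v : V // ∃ i, v ∈ C i} → V)) hregH ?_
    obtain ⟨z, hz0, hzeq⟩ := hmaxH.1
    refine ⟨z, hz0, ?_⟩
    rw [hADJH _ (fun a b => Classical.propDecidable _)]
    exact hzeq
  refine ⟨hregH, hchrom, hlmin, ?_⟩
  have hν' : (ν:ℝ) ≠ 0 := Nat.cast_ne_zero.2 (by omega)
  rw [hlmax, hlmin, Nat.cast_mul, hm1, div_neg, sub_neg_eq_add, mul_div_assoc,
    div_self hν', mul_one]
  ring
end

section
/- Let G be a connected graph with a positive adjacency eigenvector that is Hoffman colorable, and fix an optimal coloring of G. Then for every vertex v and every color class C not containing v, the vertex v has at least one neighbor in C. Consequently, if some color class has size 1, then G is a cone graph (has a universal vertex). -/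
open Matrix

private lemma rayleigh_aux {n : Type*} [Fintype n] [DecidableEq n] {A : Matrix n n ℝ}
    (hA : A.IsHermitian) {lmin : ℝ} (hl : ∀ i, lmin ≤ hA.eigenvalues i) (z : n → ℝ) :
    lmin * (z ⬝ᵥ z) ≤ z ⬝ᵥ (A *ᵥ z) ∧
    (z ⬝ᵥ (A *ᵥ z) ≤ lmin * (z ⬝ᵥ z) → A *ᵥ z = lmin • z) := by
  set U : Matrix n n ℝ := (Matrix.IsHermitian.eigenvectorUnitary hA : Matrix n n ℝ) with hUdef
  have hU1 : U * star U = 1 := (Matrix.mem_unitaryGroup_iff).mp (Matrix.IsHermitian.eigenvectorUnitary hA).2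
  have hD : (Matrix.diagonal (RCLike.ofReal ∘ hA.eigenvalues) : Matrix n n ℝ)
      = Matrix.diagonal hA.eigenvalues := by
    congr 1
  have hspec : A = U * Matrix.diagonal hA.eigenvalues * star U := by
    rw [← hD]; exact hA.spectral_theorem
  set y : n → ℝ := (star U) *ᵥ z with hy
  have hstarU : star U = Uᵀ := by
    rw [Matrix.star_eq_conjTranspose, Matrix.conjTranspose]
    ext i j
    simp
  have hzy : U *ᵥ y = z := by
    rw [hy, Matrix.mulVec_mulVec, hU1, Matrix.one_mulVec]
  have hvm : z ᵥ* U = y := by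
    rw [hy, hstarU, Matrix.mulVec_transpose]
  have hAz : A *ᵥ z = U *ᵥ ((Matrix.diagonal hA.eigenvalues) *ᵥ y) := by
    rw [hy, Matrix.mulVec_mulVec, Matrix.mulVec_mulVec, ← hspec]
  have hquad : z ⬝ᵥ (A *ᵥ z) = ∑ i, hA.eigenvalues i * (y i)^2 := by
    rw [hAz, Matrix.dotProduct_mulVec, hvm]
    simp [dotProduct, Matrix.mulVec_diagonal]
    exact Finset.sum_congr rfl fun i _ => by ring
  have hnorm : z ⬝ᵥ z = ∑ i, (y i)^2 := by
    nth_rewrite 2 [← hzy]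
    rw [Matrix.dotProduct_mulVec, hvm]
    simp [dotProduct]
    exact Finset.sum_congr rfl fun i _ => by ring
  constructor
  · rw [hquad, hnorm, Finset.mul_sum]
    exact Finset.sum_le_sum fun i _ => by nlinarith [hl i, sq_nonneg (y i)]
  · intro heq
    rw [hquad, hnorm, Finset.mul_sum] at heq
    have hall : ∀ i ∈ Finset.univ, (hA.eigenvalues i - lmin) * (y i)^2 = 0 := by
      intro i _
      have hsum : ∑ i, (hA.eigenvalues i - lmin) * (y i)^2 = 0 := by
        have : ∑ i, (hA.eigenvalues i - lmin) * (y i)^2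
            = ∑ i, hA.eigenvalues i * (y i)^2 - ∑ i, lmin * (y i)^2 := by
          rw [← Finset.sum_sub_distrib]; exact Finset.sum_congr rfl fun i _ => by ring
        have h2 : ∑ i, (hA.eigenvalues i - lmin) * (y i)^2 ≥ 0 :=
          Finset.sum_nonneg fun i _ => mul_nonneg (by linarith [hl i]) (sq_nonneg _)
        nlinarith [heq]
      exact (Finset.sum_eq_zero_iff_of_nonneg
        (fun i _ => mul_nonneg (by linarith [hl i]) (sq_nonneg _))).mp hsum i (Finset.mem_univ i)
    have hDy : (Matrix.diagonal hA.eigenvalues) *ᵥ y = lmin • y := by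
      funext i
      have h0 := hall i (Finset.mem_univ i)
      have h2 : (hA.eigenvalues i - lmin) * y i = 0 := by
        rcases mul_eq_zero.mp h0 with h | h
        · rw [h, zero_mul]
        · rw [pow_eq_zero_iff (by norm_num)] at h
          rw [h, mul_zero]
      rw [Matrix.mulVec_diagonal]
      show hA.eigenvalues i * y i = lmin * y i
      nlinarith [h2]
    rw [hAz, hDy, Matrix.mulVec_smul, hzy]

private lemma adj_eig_aux {V : Type*} [Fintype V] [DecidableEq V] (G : SimpleGraph V)
    [DecidableRel G.Adj] (hA : (G.adjMatrix ℝ).IsHermitian) (j : V) :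
    ∃ v : V → ℝ, v ≠ 0 ∧ (G.adjMatrix ℝ) *ᵥ v = hA.eigenvalues j • v := by
  refine ⟨⇑(hA.eigenvectorBasis j), ?_, hA.mulVec_eigenvectorBasis j⟩
  intro h0
  have hb : hA.eigenvectorBasis j = 0 := by
    ext k
    exact congrFun h0 k
  have := hA.eigenvectorBasis.orthonormal.1 j
  rw [hb] at this
  simp at this

open Matrix in
open Classical in
/-- In a connected Hoffman colorable graph (with a positive eigenvector), for every optimal
coloring, every vertex has at least one neighbor in every color class other than its own;
consequently, if some color class has size `1`, then `G` has a universal vertex. -/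
theorem hoffman_coloring_neighbor_in_every_class {V : Type*} [Fintype V]
    (G : SimpleGraph V) (hconn : G.Connected)
    (hne : ∃ u v : V, G.Adj u v)
    (lmax lmin : ℝ)
    (x : V → ℝ) (hxpos : ∀ v, 0 < x v)
    (hx : (G.adjMatrix ℝ) *ᵥ x = lmax • x)
    (hmax : ∀ μ, G.IsAdjEigenvalue μ → μ ≤ lmax)
    (hmin : G.IsAdjEigenvalue lmin ∧ ∀ μ, G.IsAdjEigenvalue μ → lmin ≤ μ)
    (c : ℕ) (hc : G.chromaticNumber = c)
    (hhoffman : (c : ℝ) = 1 - lmax / lmin)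
    (col : G.Coloring (Fin c)) :
    (∀ (v : V) (i : Fin c), col v ≠ i → ∃ u, G.Adj v u ∧ col u = i) ∧
    (∀ i : Fin c, (Finset.univ.filter fun v => col v = i).card = 1 →
      ∃ w : V, ∀ u, u ≠ w → G.Adj w u) := by
  classical
  obtain ⟨a, b, hab⟩ := hne
  set A : Matrix V V ℝ := G.adjMatrix ℝ with hA_def
  have hA : A.IsHermitian := by
    rw [Matrix.IsHermitian, hA_def]
    ext i j
    simp [Matrix.conjTranspose_apply, SimpleGraph.adjMatrix_apply, SimpleGraph.adj_comm]
  -- entries of A are nonneg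
  have hAnn : ∀ v w, 0 ≤ A v w := by
    intro v w
    simp only [hA_def, SimpleGraph.adjMatrix_apply]
    split <;> norm_num
  -- c ≥ 2
  have hc2 : 2 ≤ c := by
    have h1 : 1 < Fintype.card (Fin c) :=
      Fintype.one_lt_card_iff_nontrivial.mpr ⟨⟨col a, col b, col.valid hab⟩⟩
    simp at h1; omega
  have hcR : (2:ℝ) ≤ (c:ℝ) := by exact_mod_cast hc2
  have hcpos : (0:ℝ) < c := by linarith
  -- lmax > 0
  have hxv : ∀ v, (A *ᵥ x) v = lmax * x v := by
    intro v; rw [hx]; simp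
  have hlmaxpos : 0 < lmax := by
    have h1 : (A *ᵥ x) a = ∑ w, A a w * x w := rfl
    have hterm : A a b * x b ≤ ∑ w, A a w * x w :=
      Finset.single_le_sum (f := fun w => A a w * x w)
        (fun w _ => mul_nonneg (hAnn a w) (hxpos w).le) (Finset.mem_univ b)
    have hab1 : A a b = 1 := by simp [hA_def, hab]
    have h2 : x b ≤ lmax * x a := by
      rw [← hxv a, h1]; rw [hab1, one_mul] at hterm; exact hterm
    nlinarith [hxpos a, hxpos b]
  have hlminne : lmin ≠ 0 := by
    intro h
    rw [h, div_zero] at hhoffman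
    linarith
  have hkey : (c:ℝ) * lmin = lmin - lmax := by
    have h1 : (c:ℝ) * lmin = (1 - lmax/lmin) * lmin := by rw [hhoffman]
    rw [sub_mul, one_mul, div_mul_cancel₀ _ hlminne] at h1
    linarith
  have hlminneg : lmin < 0 := by
    rcases lt_or_gt_of_ne hlminne with h | h
    · exact h
    · nlinarith
  -- all eigenvalues ≥ lmin
  have hl : ∀ i, lmin ≤ hA.eigenvalues i := by
    intro i
    exact hmin.2 _ (adj_eig_aux G hA i)
  -- color class vectors
  set u : Fin c → V → ℝ := fun i v => if col v = i then x v else 0 with hu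
  set z : Fin c → V → ℝ := fun i => x - (c:ℝ) • u i with hz
  have hs_eq : ∀ i, x ⬝ᵥ u i = u i ⬝ᵥ u i := by
    intro i
    refine Finset.sum_congr rfl fun v _ => ?_
    simp only [hu]
    split <;> ring
  have hs_eq' : ∀ i, u i ⬝ᵥ x = u i ⬝ᵥ u i := by
    intro i
    refine Finset.sum_congr rfl fun v _ => ?_
    simp only [hu]
    split <;> ring
  have hsum_s : ∑ i, u i ⬝ᵥ u i = x ⬝ᵥ x := by
    unfold dotProduct
    rw [Finset.sum_comm]
    refine Finset.sum_congr rfl fun v _ => ?_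
    simp only [hu]
    rw [Finset.sum_eq_single (col v)]
    · simp
    · intro i _ hi
      simp [Ne.symm hi]
    · simp
  have hindep : ∀ i, u i ⬝ᵥ (A *ᵥ u i) = 0 := by
    intro i
    apply Finset.sum_eq_zero
    intro v _
    by_cases hv : col v = i
    · have : (A *ᵥ u i) v = 0 := by
        apply Finset.sum_eq_zero
        intro w _
        by_cases hw : G.Adj v w
        · have hwcol : col w ≠ i := by
            intro hwc
            exact col.valid hw (hv.trans hwc.symm)
          simp [hu, hwcol]
        · simp [hA_def, hw]
      rw [this, mul_zero]
    · simp [hu, hv]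
  have hxA : x ᵥ* A = lmax • x := by
    rw [← Matrix.mulVec_transpose]
    rw [hA_def, SimpleGraph.transpose_adjMatrix]
    exact hx
  have hxAw : ∀ w : V → ℝ, x ⬝ᵥ (A *ᵥ w) = lmax * (x ⬝ᵥ w) := by
    intro w
    rw [Matrix.dotProduct_mulVec, hxA, smul_dotProduct, smul_eq_mul]
  have huAx : ∀ i, u i ⬝ᵥ (A *ᵥ x) = lmax * (u i ⬝ᵥ u i) := by
    intro i
    rw [hx, dotProduct_smul, smul_eq_mul, hs_eq']
  -- quadratic forms
  have hzAz : ∀ i, z i ⬝ᵥ (A *ᵥ z i)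
      = lmax * (x ⬝ᵥ x) - 2*(c:ℝ)*lmax*(u i ⬝ᵥ u i) := by
    intro i
    simp only [hz, Matrix.mulVec_sub, Matrix.mulVec_smul, sub_dotProduct,
      dotProduct_sub, smul_dotProduct, dotProduct_smul, smul_eq_mul]
    rw [hxAw x, hxAw (u i), huAx, hindep, hs_eq]
    ring
  have hzz : ∀ i, z i ⬝ᵥ z i = x ⬝ᵥ x + ((c:ℝ)^2 - 2*(c:ℝ))*(u i ⬝ᵥ u i) := by
    intro i
    simp only [hz, sub_dotProduct, dotProduct_sub, smul_dotProduct,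
      dotProduct_smul, smul_eq_mul]
    rw [hs_eq, hs_eq']
    ring
  -- sum of Rayleigh gaps is zero
  have hQsum : ∑ i, (z i ⬝ᵥ (A *ᵥ z i) - lmin * (z i ⬝ᵥ z i)) = 0 := by
    have hre : ∀ i ∈ Finset.univ, z i ⬝ᵥ (A *ᵥ z i) - lmin * (z i ⬝ᵥ z i)
        = (lmax * (x ⬝ᵥ x) - lmin * (x ⬝ᵥ x))
          + (-(2*(c:ℝ)*lmax) - lmin*((c:ℝ)^2 - 2*(c:ℝ))) * (u i ⬝ᵥ u i) := by
      intro i _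
      rw [hzAz, hzz]
      ring
    rw [Finset.sum_congr rfl hre, Finset.sum_add_distrib, Finset.sum_const,
      ← Finset.mul_sum, hsum_s]
    simp only [Finset.card_univ, Fintype.card_fin, nsmul_eq_mul]
    linear_combination (-(c:ℝ) * (x ⬝ᵥ x)) * hkey
  have hQnn : ∀ i, 0 ≤ z i ⬝ᵥ (A *ᵥ z i) - lmin * (z i ⬝ᵥ z i) := by
    intro i
    linarith [(rayleigh_aux hA hl (z i)).1]
  have hQ0 : ∀ i, A *ᵥ z i = lmin • z i := by
    intro i
    apply (rayleigh_aux hA hl (z i)).2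
    have := (Finset.sum_eq_zero_iff_of_nonneg (fun j _ => hQnn j)).mp hQsum i (Finset.mem_univ i)
    linarith
  -- main claim
  have main : ∀ (v : V) (i : Fin c), col v ≠ i → ∃ w, G.Adj v w ∧ col w = i := by
    intro v i hvi
    have h1 := congrFun (hQ0 i) v
    have huv : u i v = 0 := by simp [hu, hvi]
    have hz_v : z i v = x v := by simp [hz, huv]
    have hAz_v : (A *ᵥ z i) v = lmax * x v - (c:ℝ) * (A *ᵥ u i) v := by
      simp only [hz, Matrix.mulVec_sub, Matrix.mulVec_smul, Pi.sub_apply, Pi.smul_apply,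
        smul_eq_mul]
      rw [hxv]
    have h2 : (A *ᵥ z i) v = lmin * x v := by
      rw [h1]
      simp [hz_v]
    have hpos : 0 < (A *ᵥ u i) v := by
      have h3 : lmax * x v - (c:ℝ) * (A *ᵥ u i) v = lmin * x v := by
        rw [← hAz_v]; exact h2
      nlinarith [hxpos v]
    by_contra hno
    push_neg at hno
    have hzero : (A *ᵥ u i) v = 0 := by
      apply Finset.sum_eq_zero
      intro w _
      by_cases hadj : G.Adj v w
      · have : col w ≠ i := fun h => (hno w hadj h).elim
        simp [hu, this]
      · simp [hA_def, hadj]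
    linarith
  refine ⟨main, ?_⟩
  intro i hcard
  obtain ⟨w, hw⟩ := Finset.card_eq_one.mp hcard
  have hwcol : col w = i := by
    have : w ∈ Finset.univ.filter fun v => col v = i := by
      rw [hw]; exact Finset.mem_singleton_self w
    exact (Finset.mem_filter.mp this).2
  refine ⟨w, fun v hvw => ?_⟩
  have hvi : col v ≠ i := by
    intro h
    have : v ∈ Finset.univ.filter fun v => col v = i := by
      simp [h]
    rw [hw] at this
    exact hvw (Finset.mem_singleton.mp this)
  obtain ⟨w', hadj, hcw'⟩ := main v i hvi
  have hw'w : w' = w := by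
    have : w' ∈ Finset.univ.filter fun v => col v = i := by simp [hcw']
    rw [hw] at this
    exact Finset.mem_singleton.mp this
  rw [hw'w] at hadj
  exact hadj.symm
end
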